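/- arXiv:math/0406410 — 8 statements merged into one kernel-verified Lean document; each statement's English description precedes it below -/
import Mathlib

section
/- Let M, N be binary forms of degrees 2d−2 and 2d−6 with M ≠ 0, and define ψ(F) = (M,F)₂ − ((d−2)/(4d−6))·N·F for F of degree d. If ψ(A) = ψ(B) = 0 for linearly independent A, B of degree d, then there exists a nonzero constant λ with M = λ·(A,B)₁ and N = λ·(A,B)₃. -/
open MvPolynomial

/-- Iterated partial derivative `∂^k/∂xᵢ^k`. -/
noncomputable def pd (i : Fin 2) (k : ℕ) (P : MvPolynomial (Fin 2) ℂ) :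
    MvPolynomial (Fin 2) ℂ :=
  (⇑(pderiv i))^[k] P

/-- The r-th transvectant of binary forms `E` (of order `e`) and `F` (of order `f`):
`(E,F)_r = ((e−r)!(f−r)!/(e!f!)) Σᵢ (−1)^i C(r,i) ∂^r E/∂x0^{r−i}∂x1^i · ∂^r F/∂x0^i ∂x1^{r−i}`. -/
noncomputable def transv (e f r : ℕ) (E F : MvPolynomial (Fin 2) ℂ) :
    MvPolynomial (Fin 2) ℂ :=
  C ((((e - r).factorial * (f - r).factorial : ℕ) : ℂ) /
      (((e.factorial * f.factorial : ℕ)) : ℂ)) *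
    ∑ i ∈ Finset.range (r + 1),
      C ((-1 : ℂ) ^ i * (r.choose i : ℂ)) *
        (pd 0 (r - i) (pd 1 i E)) * (pd 1 (r - i) (pd 0 i F))

namespace WronskianAux

noncomputable def phi : MvPolynomial (Fin 2) ℂ →ₐ[ℂ] Polynomial ℂ :=
  aeval ![Polynomial.X, 1]

lemma deg2 (s : Fin 2 →₀ ℕ) : s.degree = s 0 + s 1 := by
  rw [Finsupp.degree_apply, Finset.sum_subset (Finset.subset_univ s.support)]
  · exact Fin.sum_univ_two s
  · intro x _ hx
    simpa using Finsupp.notMem_support_iff.mp hx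

lemma hom_deg {P : MvPolynomial (Fin 2) ℂ} {n : ℕ} (h : P.IsHomogeneous n)
    {s : Fin 2 →₀ ℕ} (hs : coeff s P ≠ 0) : s 0 + s 1 = n := by
  have h2 := h hs
  rw [show ((Finsupp.weight 1) s) = s.degree by rw [Finsupp.degree_eq_weight_one]; rfl] at h2
  rw [← h2, deg2]

lemma X_mul_pderiv_monomial (i : Fin 2) (s : Fin 2 →₀ ℕ) (c : ℂ) :
    X i * pderiv i (monomial s c) = monomial s (c * (s i : ℂ)) := by
  rw [pderiv_monomial]
  by_cases h : s i = 0
  · simp [h]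
  · rw [X, monomial_mul, one_mul]
    rw [add_comm, tsub_add_cancel_of_le (Finsupp.single_le_iff.mpr (Nat.one_le_iff_ne_zero.mpr h))]

lemma euler {P : MvPolynomial (Fin 2) ℂ} {n : ℕ} (h : P.IsHomogeneous n) :
    X 0 * pderiv 0 P + X 1 * pderiv 1 P = C (n : ℂ) * P := by
  conv_lhs => rw [P.as_sum]
  rw [map_sum, map_sum, Finset.mul_sum, Finset.mul_sum, ← Finset.sum_add_distrib]
  conv_rhs => rw [P.as_sum, Finset.mul_sum]
  refine Finset.sum_congr rfl fun s hs => ?_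
  rw [X_mul_pderiv_monomial, X_mul_pderiv_monomial, ← map_add, C_mul_monomial]
  congr 1
  rw [← mul_add, ← Nat.cast_add, hom_deg h (mem_support_iff.mp hs), mul_comm]

lemma hom_pderiv' {P : MvPolynomial (Fin 2) ℂ} {n : ℕ} (h : P.IsHomogeneous (n + 1))
    (i : Fin 2) : (pderiv i P).IsHomogeneous n := by
  conv => rw [P.as_sum]
  rw [map_sum]
  apply IsHomogeneous.sum
  intro s hs
  rw [pderiv_monomial]
  by_cases hsi : s i = 0
  · rw [hsi]
    norm_num
    exact isHomogeneous_zero _ _ _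
  · apply isHomogeneous_monomial
    have hsum := hom_deg h (mem_support_iff.mp hs)
    rw [deg2, Finsupp.tsub_apply, Finsupp.tsub_apply]
    fin_cases i <;> simp [Finsupp.single_apply] at hsi ⊢ <;> omega

@[simp] lemma phi_X0 : phi (X 0) = Polynomial.X := by simp [phi]
@[simp] lemma phi_X1 : phi (X 1) = 1 := by simp [phi]
@[simp] lemma phi_C (r : ℂ) : phi (C r) = Polynomial.C r := by
  simp [phi, algHom_C]

lemma phi_pderiv0 (P : MvPolynomial (Fin 2) ℂ) :
    phi (pderiv 0 P) = Polynomial.derivative (phi P) := by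
  induction P using MvPolynomial.induction_on with
  | C r => simp
  | add p q hp hq => simp [hp, hq]
  | mul_X p i hp =>
      rw [pderiv_mul, map_add, map_mul, map_mul, map_mul, hp]
      fin_cases i <;> simp

lemma phi_eval (P : MvPolynomial (Fin 2) ℂ) (t : ℂ) :
    (phi P).eval t = eval ![t, 1] P := by
  induction P using MvPolynomial.induction_on with
  | C r => simp
  | add p q hp hq => simp [hp, hq]
  | mul_X p i hp => fin_cases i <;> simp [hp]

lemma eval_scale {P : MvPolynomial (Fin 2) ℂ} {n : ℕ} (h : P.IsHomogeneous n)
    (c : ℂ) (r : Fin 2 → ℂ) :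
    eval (fun i => c * r i) P = c ^ n * eval r P := by
  rw [eval_eq', eval_eq', Finset.mul_sum]
  refine Finset.sum_congr rfl fun s hs => ?_
  have hdeg : s 0 + s 1 = n := hom_deg h (mem_support_iff.mp hs)
  rw [Fin.prod_univ_two, Fin.prod_univ_two, mul_pow, mul_pow, ← hdeg, pow_add]
  ring

lemma phi_zero {P : MvPolynomial (Fin 2) ℂ} {n : ℕ} (h : P.IsHomogeneous n)
    (h0 : phi P = 0) : P = 0 := by
  have key : ∀ r : Fin 2 → ℂ, eval r (X 1 * P) = 0 := by
    intro r
    by_cases hr : r 1 = 0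
    · simp [hr]
    · have : eval r P = 0 := by
        have hfun : (fun i => r 1 * (![r 0 / r 1, 1]) i) = r := by
          funext i; fin_cases i <;> simp [mul_div_cancel₀, hr]
        calc eval r P = eval (fun i => r 1 * (![r 0 / r 1, 1]) i) P := by rw [hfun]
        _ = (r 1) ^ n * eval ![r 0 / r 1, 1] P := eval_scale h (r 1) _
        _ = (r 1) ^ n * (phi P).eval (r 0 / r 1) := by rw [phi_eval]
        _ = 0 := by rw [h0]; simp
      simp [this]
  have h1 : (X 1 * P : MvPolynomial (Fin 2) ℂ) = 0 :=
    ((isHomogeneous_X ℂ 1).mul h).eq_zero_of_forall_eval_eq_zero key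
  rcases mul_eq_zero.mp h1 with hX | hP
  · exact absurd hX (X_ne_zero 1)
  · exact hP

lemma phi_inj {P Q : MvPolynomial (Fin 2) ℂ} {n : ℕ} (hP : P.IsHomogeneous n)
    (hQ : Q.IsHomogeneous n) (h : phi P = phi Q) : P = Q := by
  have h2 := phi_zero (hP.sub hQ) (by rw [map_sub, h, sub_self])
  rwa [sub_eq_zero] at h2

lemma phi_ne {P : MvPolynomial (Fin 2) ℂ} {n : ℕ} (hP : P.IsHomogeneous n)
    (h : P ≠ 0) : phi P ≠ 0 :=
  fun h0 => h (phi_zero hP h0)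

lemma phi_pderiv1 {P : MvPolynomial (Fin 2) ℂ} {n : ℕ} (h : P.IsHomogeneous n) :
    phi (pderiv 1 P) = Polynomial.C (n : ℂ) * phi P
      - Polynomial.X * Polynomial.derivative (phi P) := by
  have h2 := congrArg phi (euler h)
  rw [map_add, map_mul, map_mul, map_mul, phi_X0, phi_X1, phi_C, phi_pderiv0, one_mul] at h2
  linear_combination h2

lemma oneVar {p q : Polynomial ℂ} (hq : q ≠ 0)
    (h : p * Polynomial.derivative q = Polynomial.derivative p * q) :
    ∃ c : ℂ, p = Polynomial.C c * q := by
  by_cases hp : p = 0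
  · exact ⟨0, by simp [hp]⟩
  set g := GCDMonoid.gcd p q with hg
  have hg0 : g ≠ 0 := gcd_ne_zero_of_left hp
  set p1 := p / g with hp1d
  set q1 := q / g with hq1d
  have hpe : p = g * p1 := (EuclideanDomain.mul_div_cancel' hg0 (gcd_dvd_left p q)).symm
  have hqe : q = g * q1 := (EuclideanDomain.mul_div_cancel' hg0 (gcd_dvd_right p q)).symm
  have hcop : IsCoprime p1 q1 := isCoprime_div_gcd_div_gcd hq
  have hq10 : q1 ≠ 0 := by
    intro h0; rw [h0, mul_zero] at hqe; exact hq hqe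
  have key : g * g * (p1 * Polynomial.derivative q1 - Polynomial.derivative p1 * q1) = 0 := by
    have dp : Polynomial.derivative p
        = Polynomial.derivative g * p1 + g * Polynomial.derivative p1 := by
      rw [hpe, Polynomial.derivative_mul]
    have dq : Polynomial.derivative q
        = Polynomial.derivative g * q1 + g * Polynomial.derivative q1 := by
      rw [hqe, Polynomial.derivative_mul]
    have h' := h
    rw [dp, dq, hpe, hqe] at h'
    linear_combination h'
  have key2 : p1 * Polynomial.derivative q1 = Polynomial.derivative p1 * q1 := by
    rcases mul_eq_zero.mp key with h1 | h2
    · exact absurd h1 (mul_ne_zero hg0 hg0)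
    · exact sub_eq_zero.mp h2
  have hdvd : q1 ∣ Polynomial.derivative q1 := by
    have hd : q1 ∣ p1 * Polynomial.derivative q1 := by
      rw [key2]; exact Dvd.intro_left _ rfl
    exact (hcop.symm).dvd_of_dvd_mul_left hd
  have hdq1 : Polynomial.derivative q1 = 0 := by
    by_contra hne
    have h1 := Polynomial.degree_derivative_lt hq10
    have h2 := Polynomial.degree_le_of_dvd hdvd hne
    exact absurd (lt_of_le_of_lt h2 h1) (lt_irrefl _)
  obtain ⟨c1, hc1⟩ : ∃ c1 : ℂ, q1 = Polynomial.C c1 :=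
    ⟨_, Polynomial.eq_C_of_derivative_eq_zero hdq1⟩
  have hc10 : c1 ≠ 0 := by
    intro h0; rw [h0, map_zero] at hc1; exact hq10 hc1
  have hdp1 : Polynomial.derivative p1 = 0 := by
    have h3 := key2
    rw [hdq1, hc1, mul_zero] at h3
    rcases mul_eq_zero.mp h3.symm with h1 | h2
    · exact h1
    · exact absurd (Polynomial.C_eq_zero.mp h2) hc10
  obtain ⟨c2, hc2⟩ : ∃ c2 : ℂ, p1 = Polynomial.C c2 :=
    ⟨_, Polynomial.eq_C_of_derivative_eq_zero hdp1⟩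
  refine ⟨c2 / c1, ?_⟩
  rw [hpe, hqe, hc1, hc2]
  rw [← mul_assoc, mul_comm (Polynomial.C (c2/c1)) g, mul_assoc, ← map_mul]
  congr 2
  field_simp

lemma ratio2 {P Q : MvPolynomial (Fin 2) ℂ} {n : ℕ} (hP : P.IsHomogeneous n)
    (hQ : Q.IsHomogeneous n) (hQ0 : Q ≠ 0)
    (h : phi P * Polynomial.derivative (phi Q)
        = Polynomial.derivative (phi P) * phi Q) :
    ∃ c : ℂ, P = c • Q := by
  obtain ⟨c, hc⟩ := oneVar (phi_ne hQ hQ0) h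
  refine ⟨c, phi_inj hP (by rw [smul_eq_C_mul]; exact hQ.C_mul c) ?_⟩
  rw [map_smul, Polynomial.smul_eq_C_mul, hc]

lemma pd_zero (i : Fin 2) (P : MvPolynomial (Fin 2) ℂ) : pd i 0 P = P := rfl
lemma pd_one (i : Fin 2) (P : MvPolynomial (Fin 2) ℂ) : pd i 1 P = pderiv i P := rfl
lemma pd_two (i : Fin 2) (P : MvPolynomial (Fin 2) ℂ) :
    pd i 2 P = pderiv i (pderiv i P) := rfl
lemma pd_three (i : Fin 2) (P : MvPolynomial (Fin 2) ℂ) :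
    pd i 3 P = pderiv i (pderiv i (pderiv i P)) := rfl

set_option linter.unreachableTactic false
set_option linter.unusedTactic false

lemma transv1_eq (e f : ℕ) (E F : MvPolynomial (Fin 2) ℂ) :
    transv e f 1 E F = C ((((e - 1).factorial * (f - 1).factorial : ℕ) : ℂ) /
      (((e.factorial * f.factorial : ℕ)) : ℂ)) *
      (pderiv 0 E * pderiv 1 F - pderiv 1 E * pderiv 0 F) := by
  rw [transv, Finset.sum_range_succ, Finset.sum_range_succ, Finset.sum_range_zero]
  congr 1
  norm_num [pd_zero, pd_one]
  all_goals first
  | ring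
  | tauto

lemma transv2_eq (e f : ℕ) (E F : MvPolynomial (Fin 2) ℂ) :
    transv e f 2 E F = C ((((e - 2).factorial * (f - 2).factorial : ℕ) : ℂ) /
      (((e.factorial * f.factorial : ℕ)) : ℂ)) *
      (pderiv 0 (pderiv 0 E) * pderiv 1 (pderiv 1 F)
        - C 2 * (pderiv 0 (pderiv 1 E) * pderiv 1 (pderiv 0 F))
        + pderiv 1 (pderiv 1 E) * pderiv 0 (pderiv 0 F)) := by
  rw [transv, Finset.sum_range_succ, Finset.sum_range_succ, Finset.sum_range_succ,
    Finset.sum_range_zero]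
  congr 1
  norm_num [pd_zero, pd_one, pd_two]
  all_goals first
  | ring
  | tauto

lemma transv3_eq (e f : ℕ) (E F : MvPolynomial (Fin 2) ℂ) :
    transv e f 3 E F = C ((((e - 3).factorial * (f - 3).factorial : ℕ) : ℂ) /
      (((e.factorial * f.factorial : ℕ)) : ℂ)) *
      (pderiv 0 (pderiv 0 (pderiv 0 E)) * pderiv 1 (pderiv 1 (pderiv 1 F))
        - C 3 * (pderiv 0 (pderiv 0 (pderiv 1 E)) * pderiv 1 (pderiv 1 (pderiv 0 F)))
        + C 3 * (pderiv 0 (pderiv 1 (pderiv 1 E)) * pderiv 1 (pderiv 0 (pderiv 0 F)))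
        - pderiv 1 (pderiv 1 (pderiv 1 E)) * pderiv 0 (pderiv 0 (pderiv 0 F))) := by
  rw [transv, Finset.sum_range_succ, Finset.sum_range_succ, Finset.sum_range_succ,
    Finset.sum_range_succ, Finset.sum_range_zero]
  congr 1
  norm_num [pd_zero, pd_one, pd_two, pd_three]
  all_goals first
  | ring
  | tauto

end WronskianAux

open WronskianAux

/-- if the Wronskian o.d.e. `ψ(F) = (M,F)₂ − ((d−2)/(4d−6))·N·F = 0`
has two linearly independent solutions A, B of degree d, then
M = λ·(A,B)₁ and N = λ·(A,B)₃ for some nonzero constant λ. -/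
theorem wronskian_ode_determines_transvectants (d : ℕ) (hd : 3 ≤ d)
    (M N : MvPolynomial (Fin 2) ℂ)
    (hM : M.IsHomogeneous (2 * d - 2)) (hN : N.IsHomogeneous (2 * d - 6))
    (hM0 : M ≠ 0)
    (A B : MvPolynomial (Fin 2) ℂ)
    (hA : A.IsHomogeneous d) (hB : B.IsHomogeneous d)
    (hAB : LinearIndependent ℂ ![A, B])
    (hψA : transv (2 * d - 2) d 2 M A -
      C (((d : ℂ) - 2) / (4 * (d : ℂ) - 6)) * (N * A) = 0)
    (hψB : transv (2 * d - 2) d 2 M B -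
      C (((d : ℂ) - 2) / (4 * (d : ℂ) - 6)) * (N * B) = 0) :
    ∃ l : ℂ, l ≠ 0 ∧ M = l • transv d d 1 A B ∧ N = l • transv d d 3 A B := by
  classical
  obtain ⟨k, rfl⟩ : ∃ k, d = k + 3 := ⟨d - 3, by omega⟩
  have e1 : 2 * (k + 3) - 2 = 2 * k + 4 := by omega
  have e2 : 2 * (k + 3) - 6 = 2 * k := by omega
  rw [e1] at hM hψA hψB
  rw [e2] at hN
  rw [transv2_eq, show 2*k+4-2 = 2*k+2 by omega, show k+3-2 = k+1 by omega] at hψA hψB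
  -- useful nonzero facts
  have hfne : ∀ n : ℕ, ((n.factorial : ℕ) : ℂ) ≠ 0 :=
    fun n => Nat.cast_ne_zero.mpr (Nat.factorial_ne_zero n)
  have hf24 : ((2*k+4).factorial : ℂ)
      = ((2*k+4 : ℕ) : ℂ) * ((2*k+3 : ℕ) : ℂ) * ((2*k+2).factorial : ℂ) := by
    rw [show (2*k+4) = (2*k+2)+1+1 from rfl, Nat.factorial_succ, Nat.factorial_succ]
    push_cast; ring
  have hf3 : ((k+3).factorial : ℂ)
      = ((k+3 : ℕ) : ℂ) * ((k+2 : ℕ) : ℂ) * ((k+1).factorial : ℂ) := by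
    rw [show (k+3) = (k+1)+1+1 from rfl, Nat.factorial_succ, Nat.factorial_succ]
    push_cast; ring
  have hconst : ((((k+3 : ℕ)) : ℂ) - 2) / (4 * (((k+3 : ℕ)) : ℂ) - 6)
      = (((2*k+2).factorial * (k+1).factorial : ℕ) : ℂ)
          / (((2*k+4).factorial * (k+3).factorial : ℕ) : ℂ)
        * ((((k+3)*(k+2)^2*(k+1) : ℕ)) : ℂ) := by
    have h2k3 : (2*(k:ℂ)+3) ≠ 0 := by
      have h0 := Nat.cast_ne_zero (R := ℂ).mpr (show 2*k+3 ≠ 0 by omega)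
      push_cast at h0; exact h0
    have h46 : 4 * (((k+3:ℕ)) : ℂ) - 6 ≠ 0 := by
      intro h0
      apply h2k3
      push_cast at h0
      linear_combination h0 / 2
    have hdd : (((2*k+4).factorial * (k+3).factorial : ℕ) : ℂ) ≠ 0 := by
      push_cast
      exact mul_ne_zero (hfne _) (hfne _)
    rw [div_mul_eq_mul_div, div_eq_div_iff h46 hdd]
    push_cast
    rw [hf24, hf3]
    push_cast
    ring
  have hcstne : (((2*k+2).factorial * (k+1).factorial : ℕ) : ℂ)
      / (((2*k+4).factorial * (k+3).factorial : ℕ) : ℂ) ≠ 0 := by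
    apply div_ne_zero
    · push_cast
      exact mul_ne_zero (hfne _) (hfne _)
    · push_cast
      exact mul_ne_zero (hfne _) (hfne _)
  have hrawA : pderiv 0 (pderiv 0 M) * pderiv 1 (pderiv 1 A)
      - C 2 * (pderiv 0 (pderiv 1 M) * pderiv 1 (pderiv 0 A))
      + pderiv 1 (pderiv 1 M) * pderiv 0 (pderiv 0 A)
      = C ((((k+3)*(k+2)^2*(k+1) : ℕ)) : ℂ) * (N * A) := by
    have h' := sub_eq_zero.mp hψA
    rw [hconst, C_mul, mul_assoc] at h'
    exact mul_left_cancel₀ (by rwa [ne_eq, C_eq_zero]) h'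
  have hrawB : pderiv 0 (pderiv 0 M) * pderiv 1 (pderiv 1 B)
      - C 2 * (pderiv 0 (pderiv 1 M) * pderiv 1 (pderiv 0 B))
      + pderiv 1 (pderiv 1 M) * pderiv 0 (pderiv 0 B)
      = C ((((k+3)*(k+2)^2*(k+1) : ℕ)) : ℂ) * (N * B) := by
    have h' := sub_eq_zero.mp hψB
    rw [hconst, C_mul, mul_assoc] at h'
    exact mul_left_cancel₀ (by rwa [ne_eq, C_eq_zero]) h'
  -- one-variable atoms
  obtain ⟨a, ha⟩ : ∃ p, phi A = p := ⟨_, rfl⟩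
  obtain ⟨a1, hda⟩ : ∃ p, Polynomial.derivative a = p := ⟨_, rfl⟩
  obtain ⟨a2, hda1⟩ : ∃ p, Polynomial.derivative a1 = p := ⟨_, rfl⟩
  obtain ⟨a3, hda2⟩ : ∃ p, Polynomial.derivative a2 = p := ⟨_, rfl⟩
  obtain ⟨b, hb⟩ : ∃ p, phi B = p := ⟨_, rfl⟩
  obtain ⟨b1, hdb⟩ : ∃ p, Polynomial.derivative b = p := ⟨_, rfl⟩
  obtain ⟨b2, hdb1⟩ : ∃ p, Polynomial.derivative b1 = p := ⟨_, rfl⟩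
  obtain ⟨b3, hdb2⟩ : ∃ p, Polynomial.derivative b2 = p := ⟨_, rfl⟩
  obtain ⟨m, hm⟩ : ∃ p, phi M = p := ⟨_, rfl⟩
  obtain ⟨m1, hdm⟩ : ∃ p, Polynomial.derivative m = p := ⟨_, rfl⟩
  obtain ⟨m2, hdm1⟩ : ∃ p, Polynomial.derivative m1 = p := ⟨_, rfl⟩
  obtain ⟨nu, hnu⟩ : ∃ p, phi N = p := ⟨_, rfl⟩
  have dsimp_lemmas := 0
  -- jets of A
  have jA1 : phi (pderiv 1 A) = ((k : Polynomial ℂ)+3) * a - Polynomial.X * a1 := by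
    have h0 := phi_pderiv1 hA
    rw [ha, hda] at h0
    rw [h0, Polynomial.C_eq_natCast]
    push_cast
    ring
  have jA00 : phi (pderiv 0 (pderiv 0 A)) = a2 := by
    rw [phi_pderiv0, phi_pderiv0, ha, hda, hda1]
  have jA10 : phi (pderiv 1 (pderiv 0 A)) = ((k : Polynomial ℂ)+2) * a1 - Polynomial.X * a2 := by
    have h0 := phi_pderiv1 (hom_pderiv' hA 0)
    rw [phi_pderiv0, ha, hda, hda1] at h0
    rw [h0, Polynomial.C_eq_natCast]
    push_cast
    ring
  have jA11 : phi (pderiv 1 (pderiv 1 A))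
      = ((k : Polynomial ℂ)+3)*((k : Polynomial ℂ)+2) * a
        - 2*((k : Polynomial ℂ)+2) * (Polynomial.X * a1) + Polynomial.X^2 * a2 := by
    have h0 := phi_pderiv1 (hom_pderiv' hA 1)
    rw [jA1] at h0
    rw [h0, Polynomial.C_eq_natCast]
    simp only [Polynomial.derivative_sub, Polynomial.derivative_add, Polynomial.derivative_mul,
      Polynomial.derivative_X, Polynomial.derivative_natCast, Polynomial.derivative_ofNat,
      Polynomial.derivative_one, Polynomial.derivative_zero, map_ofNat, Nat.cast_ofNat,
      hda, hda1]
    push_cast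
    ring
  -- jets of B
  have jB1 : phi (pderiv 1 B) = ((k : Polynomial ℂ)+3) * b - Polynomial.X * b1 := by
    have h0 := phi_pderiv1 hB
    rw [hb, hdb] at h0
    rw [h0, Polynomial.C_eq_natCast]
    push_cast
    ring
  have jB00 : phi (pderiv 0 (pderiv 0 B)) = b2 := by
    rw [phi_pderiv0, phi_pderiv0, hb, hdb, hdb1]
  have jB10 : phi (pderiv 1 (pderiv 0 B)) = ((k : Polynomial ℂ)+2) * b1 - Polynomial.X * b2 := by
    have h0 := phi_pderiv1 (hom_pderiv' hB 0)
    rw [phi_pderiv0, hb, hdb, hdb1] at h0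
    rw [h0, Polynomial.C_eq_natCast]
    push_cast
    ring
  have jB11 : phi (pderiv 1 (pderiv 1 B))
      = ((k : Polynomial ℂ)+3)*((k : Polynomial ℂ)+2) * b
        - 2*((k : Polynomial ℂ)+2) * (Polynomial.X * b1) + Polynomial.X^2 * b2 := by
    have h0 := phi_pderiv1 (hom_pderiv' hB 1)
    rw [jB1] at h0
    rw [h0, Polynomial.C_eq_natCast]
    simp only [Polynomial.derivative_sub, Polynomial.derivative_add, Polynomial.derivative_mul,
      Polynomial.derivative_X, Polynomial.derivative_natCast, Polynomial.derivative_ofNat,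
      Polynomial.derivative_one, Polynomial.derivative_zero, map_ofNat, Nat.cast_ofNat,
      hdb, hdb1]
    push_cast
    ring
  -- jets of M
  have jM1 : phi (pderiv 1 M) = (2*(k : Polynomial ℂ)+4) * m - Polynomial.X * m1 := by
    have h0 := phi_pderiv1 hM
    rw [hm, hdm] at h0
    rw [h0, Polynomial.C_eq_natCast]
    push_cast
    ring
  have jM00 : phi (pderiv 0 (pderiv 0 M)) = m2 := by
    rw [phi_pderiv0, phi_pderiv0, hm, hdm, hdm1]
  have jM01 : phi (pderiv 0 (pderiv 1 M)) = (2*(k : Polynomial ℂ)+3) * m1 - Polynomial.X * m2 := by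
    rw [phi_pderiv0, jM1]
    simp only [Polynomial.derivative_sub, Polynomial.derivative_add, Polynomial.derivative_mul,
      Polynomial.derivative_X, Polynomial.derivative_natCast, Polynomial.derivative_ofNat,
      Polynomial.derivative_one, Polynomial.derivative_zero, map_ofNat, Nat.cast_ofNat,
      hdm, hdm1]
    ring
  have jM11 : phi (pderiv 1 (pderiv 1 M))
      = (2*(k : Polynomial ℂ)+4)*(2*(k : Polynomial ℂ)+3) * m
        - 2*(2*(k : Polynomial ℂ)+3) * (Polynomial.X * m1) + Polynomial.X^2 * m2 := by
    have h0 := phi_pderiv1 (hom_pderiv' hM 1)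
    rw [jM1] at h0
    rw [h0, Polynomial.C_eq_natCast]
    simp only [Polynomial.derivative_sub, Polynomial.derivative_add, Polynomial.derivative_mul,
      Polynomial.derivative_X, Polynomial.derivative_natCast, Polynomial.derivative_ofNat,
      Polynomial.derivative_one, Polynomial.derivative_zero, map_ofNat, Nat.cast_ofNat,
      hdm, hdm1]
    push_cast
    ring
  -- mapped hypotheses
  have HA := congrArg phi hrawA
  simp only [map_sub, map_add, map_mul, phi_C, map_ofNat, Polynomial.C_eq_natCast,
    jM00, jA11, jM01, jA10, jM11, jA00, ha, hnu] at HA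
  push_cast at HA
  have HB := congrArg phi hrawB
  simp only [map_sub, map_add, map_mul, phi_C, map_ofNat, Polynomial.C_eq_natCast,
    jM00, jB11, jM01, jB10, jM11, jB00, hb, hnu] at HB
  push_cast at HB
  -- the Wronskian
  set W := pderiv 0 A * pderiv 1 B - pderiv 1 A * pderiv 0 B with hWdef
  have hqphi : phi W = ((k : Polynomial ℂ)+3) * (a1*b - a*b1) := by
    rw [hWdef]
    simp only [map_sub, map_mul, phi_pderiv0, jA1, jB1, ha, hb, hda, hdb]
    ring
  have hqd : Polynomial.derivative (phi W) = ((k : Polynomial ℂ)+3) * (a2*b - a*b2) := by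
    rw [hqphi]
    simp only [Polynomial.derivative_sub, Polynomial.derivative_add, Polynomial.derivative_mul,
      Polynomial.derivative_X, Polynomial.derivative_natCast, Polynomial.derivative_ofNat,
      Polynomial.derivative_one, Polynomial.derivative_zero, map_ofNat, Nat.cast_ofNat,
      hda, hdb, hda1, hdb1]
    ring
  have hWhom : W.IsHomogeneous (2*k+4) := by
    have h0 : ((k+2)+(k+2)) = 2*k+4 := by omega
    rw [hWdef, ← h0]
    exact ((hom_pderiv' hA 0).mul (hom_pderiv' hB 1)).sub
      ((hom_pderiv' hA 1).mul (hom_pderiv' hB 0))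
  have hk3X : ((k : Polynomial ℂ)+3) ≠ 0 := by
    have h0 : ((k : Polynomial ℂ)+3) = ((k+3 : ℕ) : Polynomial ℂ) := by push_cast; ring
    rw [h0, ← Polynomial.C_eq_natCast, ne_eq, Polynomial.C_eq_zero]
    exact Nat.cast_ne_zero.mpr (by omega)
  have hBne : B ≠ 0 := by
    have h0 := (linearIndependent_fin2.mp hAB).1
    simpa using h0
  have hAne : A ≠ 0 := by
    have h0 := (linearIndependent_fin2.mp hAB).2 0
    simp only [Matrix.cons_val_one, Matrix.head_cons, Matrix.cons_val_zero, zero_smul] at h0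
    exact fun h => h0 h.symm
  have hWne : W ≠ 0 := by
    intro h0
    have h1 : phi W = 0 := by rw [h0, map_zero]
    rw [hqphi] at h1
    have h2 : a1*b - a*b1 = 0 := by
      rcases mul_eq_zero.mp h1 with h3 | h3
      · exact absurd h3 hk3X
      · exact h3
    have h3 : phi A * Polynomial.derivative (phi B) = Polynomial.derivative (phi A) * phi B := by
      rw [ha, hb, hda, hdb]
      linear_combination -h2
    obtain ⟨c', hc'⟩ := ratio2 hA hB hBne h3
    apply (linearIndependent_fin2.mp hAB).2 c'
    simpa using hc'.symm
  -- M is proportional to W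
  have hcancel : (2*((k : Polynomial ℂ)+2)*(2*(k : Polynomial ℂ)+3)) ≠ 0 := by
    have h0 : (2*((k : Polynomial ℂ)+2)*(2*(k : Polynomial ℂ)+3))
        = ((2*(k+2)*(2*k+3) : ℕ) : Polynomial ℂ) := by push_cast; ring
    rw [h0, ← Polynomial.C_eq_natCast, ne_eq, Polynomial.C_eq_zero]
    exact Nat.cast_ne_zero.mpr (by positivity)
  have key1 : (2*((k : Polynomial ℂ)+2)*(2*(k : Polynomial ℂ)+3))
      * (m * (((k : Polynomial ℂ)+3) * (a2*b - a*b2))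
         - m1 * (((k : Polynomial ℂ)+3) * (a1*b - a*b1))) = 0 := by
    linear_combination (((k : Polynomial ℂ)+3) * b) * HA - (((k : Polynomial ℂ)+3) * a) * HB
  have key1' : phi M * Polynomial.derivative (phi W)
      = Polynomial.derivative (phi M) * phi W := by
    rw [hqd, hqphi, hm, hdm]
    rcases mul_eq_zero.mp key1 with h0 | h0
    · exact absurd h0 hcancel
    · linear_combination h0
  obtain ⟨c, hMc⟩ := ratio2 hM hWhom hWne key1'
  have hc0 : c ≠ 0 := by
    intro h0
    rw [h0, zero_smul] at hMc
    exact hM0 hMc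
  -- substitute M = c • W into the mapped equation for A
  have hm0 : m = Polynomial.C c * (((k : Polynomial ℂ)+3) * (a1*b - a*b1)) := by
    rw [← hm, hMc, map_smul, Polynomial.smul_eq_C_mul, hqphi]
  have hm1e : m1 = Polynomial.C c * (((k : Polynomial ℂ)+3) * (a2*b - a*b2)) := by
    rw [← hdm, hm0]
    simp only [Polynomial.derivative_sub, Polynomial.derivative_add, Polynomial.derivative_mul,
      Polynomial.derivative_X, Polynomial.derivative_natCast, Polynomial.derivative_ofNat,
      Polynomial.derivative_one, Polynomial.derivative_zero, map_ofNat, Nat.cast_ofNat,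
      Polynomial.derivative_C, Polynomial.derivative_X_pow, hda, hda1, hda2, hdb, hdb1, hdb2,
      hdm, hdm1]
    ring
  have hm2e : m2 = Polynomial.C c * (((k : Polynomial ℂ)+3) * (a3*b + a2*b1 - a1*b2 - a*b3)) := by
    rw [← hdm1, hm1e]
    simp only [Polynomial.derivative_sub, Polynomial.derivative_add, Polynomial.derivative_mul,
      Polynomial.derivative_X, Polynomial.derivative_natCast, Polynomial.derivative_ofNat,
      Polynomial.derivative_one, Polynomial.derivative_zero, map_ofNat, Nat.cast_ofNat,
      Polynomial.derivative_C, Polynomial.derivative_X_pow, hda, hda1, hda2, hdb, hdb1, hdb2,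
      hdm, hdm1]
    ring
  rw [hm2e, hm1e, hm0] at HA
  -- third-order jets
  have jA000 : phi (pderiv 0 (pderiv 0 (pderiv 0 A))) = a3 := by
    rw [phi_pderiv0, phi_pderiv0, phi_pderiv0, ha, hda, hda1, hda2]
  have jB000 : phi (pderiv 0 (pderiv 0 (pderiv 0 B))) = b3 := by
    rw [phi_pderiv0, phi_pderiv0, phi_pderiv0, hb, hdb, hdb1, hdb2]
  have jA001 : phi (pderiv 0 (pderiv 0 (pderiv 1 A)))
      = ((k : Polynomial ℂ)+1) * a2 - Polynomial.X * a3 := by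
    rw [phi_pderiv0, phi_pderiv0, jA1]
    simp only [Polynomial.derivative_sub, Polynomial.derivative_add, Polynomial.derivative_mul,
      Polynomial.derivative_X, Polynomial.derivative_natCast, Polynomial.derivative_ofNat,
      Polynomial.derivative_one, Polynomial.derivative_zero, map_ofNat, Nat.cast_ofNat,
      Polynomial.derivative_C, Polynomial.derivative_X_pow, hda, hda1, hda2, hdb, hdb1, hdb2,
      hdm, hdm1]
    ring
  have jA011 : phi (pderiv 0 (pderiv 1 (pderiv 1 A)))
      = ((k : Polynomial ℂ)+2)*((k : Polynomial ℂ)+1) * a1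
        - 2*((k : Polynomial ℂ)+1) * (Polynomial.X * a2) + Polynomial.X^2 * a3 := by
    rw [phi_pderiv0, jA11]
    simp only [Polynomial.derivative_sub, Polynomial.derivative_add, Polynomial.derivative_mul,
      Polynomial.derivative_X, Polynomial.derivative_natCast, Polynomial.derivative_ofNat,
      Polynomial.derivative_one, Polynomial.derivative_zero, map_ofNat, Nat.cast_ofNat,
      Polynomial.derivative_C, Polynomial.derivative_X_pow, hda, hda1, hda2, hdb, hdb1, hdb2,
      hdm, hdm1]
    ring
  have jA111 : phi (pderiv 1 (pderiv 1 (pderiv 1 A)))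
      = ((k : Polynomial ℂ)+3)*((k : Polynomial ℂ)+2)*((k : Polynomial ℂ)+1) * a
        - 3*((k : Polynomial ℂ)+2)*((k : Polynomial ℂ)+1) * (Polynomial.X * a1)
        + 3*((k : Polynomial ℂ)+1) * (Polynomial.X^2 * a2) - Polynomial.X^3 * a3 := by
    have h0 := phi_pderiv1 (hom_pderiv' (hom_pderiv' hA 1) 1)
    rw [jA11] at h0
    rw [h0, Polynomial.C_eq_natCast]
    simp only [Polynomial.derivative_sub, Polynomial.derivative_add, Polynomial.derivative_mul,
      Polynomial.derivative_X, Polynomial.derivative_natCast, Polynomial.derivative_ofNat,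
      Polynomial.derivative_one, Polynomial.derivative_zero, map_ofNat, Nat.cast_ofNat,
      Polynomial.derivative_C, Polynomial.derivative_X_pow, hda, hda1, hda2, hdb, hdb1, hdb2,
      hdm, hdm1]
    push_cast
    ring
  have jB100 : phi (pderiv 1 (pderiv 0 (pderiv 0 B)))
      = ((k : Polynomial ℂ)+1) * b2 - Polynomial.X * b3 := by
    have h0 := phi_pderiv1 (hom_pderiv' (hom_pderiv' hB 0) 0)
    rw [phi_pderiv0, phi_pderiv0, hb, hdb, hdb1, hdb2] at h0
    rw [h0, Polynomial.C_eq_natCast]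
    push_cast
    ring
  have jB110 : phi (pderiv 1 (pderiv 1 (pderiv 0 B)))
      = ((k : Polynomial ℂ)+2)*((k : Polynomial ℂ)+1) * b1
        - 2*((k : Polynomial ℂ)+1) * (Polynomial.X * b2) + Polynomial.X^2 * b3 := by
    have h0 := phi_pderiv1 (hom_pderiv' (hom_pderiv' hB 0) 1)
    rw [jB10] at h0
    rw [h0, Polynomial.C_eq_natCast]
    simp only [Polynomial.derivative_sub, Polynomial.derivative_add, Polynomial.derivative_mul,
      Polynomial.derivative_X, Polynomial.derivative_natCast, Polynomial.derivative_ofNat,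
      Polynomial.derivative_one, Polynomial.derivative_zero, map_ofNat, Nat.cast_ofNat,
      Polynomial.derivative_C, Polynomial.derivative_X_pow, hda, hda1, hda2, hdb, hdb1, hdb2,
      hdm, hdm1]
    push_cast
    ring
  have jB111 : phi (pderiv 1 (pderiv 1 (pderiv 1 B)))
      = ((k : Polynomial ℂ)+3)*((k : Polynomial ℂ)+2)*((k : Polynomial ℂ)+1) * b
        - 3*((k : Polynomial ℂ)+2)*((k : Polynomial ℂ)+1) * (Polynomial.X * b1)
        + 3*((k : Polynomial ℂ)+1) * (Polynomial.X^2 * b2) - Polynomial.X^3 * b3 := by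
    have h0 := phi_pderiv1 (hom_pderiv' (hom_pderiv' hB 1) 1)
    rw [jB11] at h0
    rw [h0, Polynomial.C_eq_natCast]
    simp only [Polynomial.derivative_sub, Polynomial.derivative_add, Polynomial.derivative_mul,
      Polynomial.derivative_X, Polynomial.derivative_natCast, Polynomial.derivative_ofNat,
      Polynomial.derivative_one, Polynomial.derivative_zero, map_ofNat, Nat.cast_ofNat,
      Polynomial.derivative_C, Polynomial.derivative_X_pow, hda, hda1, hda2, hdb, hdb1, hdb2,
      hdm, hdm1]
    push_cast
    ring
  -- the third transvectant numerator
  set J2 := pderiv 0 (pderiv 0 (pderiv 0 A)) * pderiv 1 (pderiv 1 (pderiv 1 B))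
      - C 3 * (pderiv 0 (pderiv 0 (pderiv 1 A)) * pderiv 1 (pderiv 1 (pderiv 0 B)))
      + C 3 * (pderiv 0 (pderiv 1 (pderiv 1 A)) * pderiv 1 (pderiv 0 (pderiv 0 B)))
      - pderiv 1 (pderiv 1 (pderiv 1 A)) * pderiv 0 (pderiv 0 (pderiv 0 B)) with hJ2def
  have hJ2hom : J2.IsHomogeneous (2*k) := by
    have h0 : k + k = 2*k := by omega
    rw [hJ2def, ← h0]
    exact ((((hom_pderiv' (hom_pderiv' (hom_pderiv' hA 0) 0) 0).mul
        (hom_pderiv' (hom_pderiv' (hom_pderiv' hB 1) 1) 1)).sub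
      (((hom_pderiv' (hom_pderiv' (hom_pderiv' hA 1) 0) 0).mul
        (hom_pderiv' (hom_pderiv' (hom_pderiv' hB 0) 1) 1)).C_mul 3)).add
      (((hom_pderiv' (hom_pderiv' (hom_pderiv' hA 1) 1) 0).mul
        (hom_pderiv' (hom_pderiv' (hom_pderiv' hB 0) 0) 1)).C_mul 3)).sub
      ((hom_pderiv' (hom_pderiv' (hom_pderiv' hA 1) 1) 1).mul
        (hom_pderiv' (hom_pderiv' (hom_pderiv' hB 0) 0) 0))
  have hJphi : phi J2
      = a3 * (((k : Polynomial ℂ)+3)*((k : Polynomial ℂ)+2)*((k : Polynomial ℂ)+1) * b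
          - 3*((k : Polynomial ℂ)+2)*((k : Polynomial ℂ)+1) * (Polynomial.X * b1)
          + 3*((k : Polynomial ℂ)+1) * (Polynomial.X^2 * b2) - Polynomial.X^3 * b3)
        - 3*((((k : Polynomial ℂ)+1) * a2 - Polynomial.X * a3)
            * (((k : Polynomial ℂ)+2)*((k : Polynomial ℂ)+1) * b1
              - 2*((k : Polynomial ℂ)+1) * (Polynomial.X * b2) + Polynomial.X^2 * b3))
        + 3*((((k : Polynomial ℂ)+2)*((k : Polynomial ℂ)+1) * a1
              - 2*((k : Polynomial ℂ)+1) * (Polynomial.X * a2) + Polynomial.X^2 * a3)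
            * (((k : Polynomial ℂ)+1) * b2 - Polynomial.X * b3))
        - (((k : Polynomial ℂ)+3)*((k : Polynomial ℂ)+2)*((k : Polynomial ℂ)+1) * a
          - 3*((k : Polynomial ℂ)+2)*((k : Polynomial ℂ)+1) * (Polynomial.X * a1)
          + 3*((k : Polynomial ℂ)+1) * (Polynomial.X^2 * a2) - Polynomial.X^3 * a3) * b3 := by
    rw [hJ2def]
    simp only [map_sub, map_add, map_mul, map_ofNat, phi_C, jA000, jB111, jA001, jB110,
      jA011, jB100, jA111, jB000]
    try ring
  -- extract N
  have haX : a ≠ 0 := by rw [← ha]; exact phi_ne hA hAne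
  have key2 : a * ((((((k+3)*(k+2)*(k+1))^2 : ℕ)) : Polynomial ℂ) * nu
      - Polynomial.C c * (((k : Polynomial ℂ)+3)^2 * phi J2)) = 0 := by
    rw [hJphi]
    push_cast
    linear_combination (-(((k : Polynomial ℂ)+3)*((k : Polynomial ℂ)+1))) * HA
  have key2' : (((((k+3)*(k+2)*(k+1))^2 : ℕ)) : Polynomial ℂ) * nu
      = Polynomial.C c * (((k : Polynomial ℂ)+3)^2 * phi J2) := by
    rcases mul_eq_zero.mp key2 with h0 | h0
    · exact absurd h0 haX
    · linear_combination h0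
  -- lift back to two variables
  have hlift : C ((((((k+3)*(k+2)*(k+1))^2 : ℕ))) : ℂ) * N
      = C c * (C ((((k+3)^2 : ℕ)) : ℂ) * J2) := by
    apply phi_inj (n := 2*k) (hN.C_mul _) ((hJ2hom.C_mul _).C_mul _)
    simp only [map_mul, phi_C, hnu]
    rw [Polynomial.C_eq_natCast, Polynomial.C_eq_natCast]
    push_cast
    push_cast at key2'
    linear_combination key2'
  -- final scalar facts
  have hf3' : ((k+3).factorial : ℂ) = ((k+3 : ℕ) : ℂ) * ((k+2).factorial : ℂ) := by
    rw [show (k+3) = (k+2)+1 from rfl, Nat.factorial_succ]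
    push_cast
    ring
  have hf3'' : ((k+3).factorial : ℂ)
      = ((k+3 : ℕ) : ℂ) * ((k+2 : ℕ) : ℂ) * ((k+1 : ℕ) : ℂ) * (k.factorial : ℂ) := by
    rw [show (k+3) = k+1+1+1 from rfl, Nat.factorial_succ, Nat.factorial_succ,
      Nat.factorial_succ]
    push_cast
    ring
  refine ⟨c * (((k+3 : ℕ)) : ℂ)^2, ?_, ?_, ?_⟩
  · exact mul_ne_zero hc0 (pow_ne_zero _ (Nat.cast_ne_zero.mpr (by omega)))
  · -- M = l • (A,B)_1
    have hs1 : c * (((k+3 : ℕ)) : ℂ)^2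
        * (((((k+2).factorial * (k+2).factorial : ℕ)) : ℂ)
          / ((((k+3).factorial * (k+3).factorial : ℕ)) : ℂ)) = c := by
      rw [← mul_div_assoc, div_eq_iff (by push_cast; exact mul_ne_zero (hfne _) (hfne _))]
      push_cast
      rw [hf3']
      push_cast
      ring
    rw [transv1_eq, show k+3-1 = k+2 by omega, ← hWdef, smul_eq_C_mul, ← mul_assoc, ← C_mul,
      hs1, ← smul_eq_C_mul]
    exact hMc
  · -- N = l • (A,B)_3
    have hγne : (C ((((((k+3)*(k+2)*(k+1))^2 : ℕ))) : ℂ) : MvPolynomial (Fin 2) ℂ) ≠ 0 := by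
      rw [ne_eq, C_eq_zero]
      exact Nat.cast_ne_zero.mpr (by positivity)
    have hdenne : ((((k+3).factorial * (k+3).factorial : ℕ)) : ℂ) ≠ 0 := by
      push_cast
      exact mul_ne_zero (hfne _) (hfne _)
    have hs2 : (((((k+3)*(k+2)*(k+1))^2 : ℕ)) : ℂ)
        * (c * (((k+3 : ℕ)) : ℂ)^2 * ((((k.factorial * k.factorial : ℕ)) : ℂ)
          / ((((k+3).factorial * (k+3).factorial : ℕ)) : ℂ)))
        = c * ((((k+3)^2 : ℕ)) : ℂ) := by
      rw [← mul_div_assoc, ← mul_div_assoc, div_eq_iff hdenne]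
      push_cast
      rw [hf3'']
      push_cast
      ring
    rw [transv3_eq, show k+3-3 = k by omega, ← hJ2def, smul_eq_C_mul, ← mul_assoc, ← C_mul]
    apply mul_left_cancel₀ hγne
    rw [hlift, ← mul_assoc (C c), ← C_mul,
      ← mul_assoc (C ((((((k+3)*(k+2)*(k+1))^2 : ℕ))) : ℂ)), ← C_mul, hs2]
end

section
/- Let A be a binary form of degree d with coefficients a_p (written A = Σ_p C(d,p) a_p x0^{d−p} x1^p), and let J be an invariant of A of degree n. Define the first evectant Ev_J = ((−1)^d/n) Σ_q (−1)^q (∂J/∂a_q) x0^q x1^{d−q}. Then (Ev_J, A)_d = J. -/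
open MvPolynomial

lemma pd_C_mul (i : Fin 2) (k : ℕ) (c : ℂ) (P : MvPolynomial (Fin 2) ℂ) :
    pd i k (C c * P) = C c * pd i k P := by
  induction k generalizing P with
  | zero => rfl
  | succ k ih =>
    simp only [pd, Function.iterate_succ_apply] at *
    rw [pderiv_C_mul, ih]

lemma pd_sum {α : Type*} (i : Fin 2) (k : ℕ) (s : Finset α)
    (f : α → MvPolynomial (Fin 2) ℂ) :
    pd i k (∑ x ∈ s, f x) = ∑ x ∈ s, pd i k (f x) := by
  induction k generalizing f with
  | zero => rfl
  | succ k ih =>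
    simp only [pd, Function.iterate_succ_apply] at *
    rw [map_sum, ih]

lemma pd0_spec (k m l : ℕ) (c : ℂ) :
    pd 0 k (C c * X 0 ^ m * X 1 ^ l) =
      C (c * (m.descFactorial k : ℂ)) * X 0 ^ (m - k) * X 1 ^ l := by
  induction k with
  | zero => simp [pd]
  | succ k ih =>
    rw [pd, Function.iterate_succ_apply', ← pd, ih]
    rw [mul_assoc, pderiv_C_mul, pderiv_mul, Derivation.leibniz_pow, Derivation.leibniz_pow]
    have h0 : (pderiv (0 : Fin 2)) (X (0 : Fin 2) : MvPolynomial (Fin 2) ℂ) = 1 :=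
      pderiv_X_self 0
    have h1 : (pderiv (0 : Fin 2)) (X (1 : Fin 2) : MvPolynomial (Fin 2) ℂ) = 0 :=
      pderiv_X_of_ne (by decide)
    rw [h0, h1]
    simp only [smul_eq_mul, mul_one, mul_zero, smul_zero, add_zero, nsmul_eq_mul]
    rw [Nat.descFactorial_succ, Nat.sub_sub]
    push_cast
    simp only [C_mul, map_natCast]
    ring

lemma pd1_spec (k m l : ℕ) (c : ℂ) :
    pd 1 k (C c * X 0 ^ m * X 1 ^ l) =
      C (c * (l.descFactorial k : ℂ)) * X 0 ^ m * X 1 ^ (l - k) := by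
  induction k with
  | zero => simp [pd]
  | succ k ih =>
    rw [pd, Function.iterate_succ_apply', ← pd, ih]
    rw [mul_assoc, pderiv_C_mul, pderiv_mul, Derivation.leibniz_pow, Derivation.leibniz_pow]
    have h0 : (pderiv (1 : Fin 2)) (X (0 : Fin 2) : MvPolynomial (Fin 2) ℂ) = 0 :=
      pderiv_X_of_ne (by decide)
    have h1 : (pderiv (1 : Fin 2)) (X (1 : Fin 2) : MvPolynomial (Fin 2) ℂ) = 1 :=
      pderiv_X_self 1
    rw [h0, h1]
    simp only [smul_eq_mul, mul_one, mul_zero, smul_zero, zero_mul, zero_add, nsmul_eq_mul]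
    rw [Nat.descFactorial_succ, Nat.sub_sub]
    push_cast
    simp only [C_mul, map_natCast]
    ring

lemma euler_monomial {σ : Type*} [Fintype σ] [DecidableEq σ] (s : σ →₀ ℕ) (c : ℂ)
    (a : σ → ℂ) (i : σ) :
    a i * eval a (pderiv i (monomial s c)) = (s i : ℂ) * eval a (monomial s c) := by
  rw [pderiv_monomial]
  rcases Nat.eq_zero_or_pos (s i) with h | h
  · simp [h]
  · have key : eval a (monomial s c) = eval a (monomial (s - Finsupp.single i 1) c) * a i := by
      have hs : s = (s - Finsupp.single i 1) + Finsupp.single i 1 := by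
        ext j
        rcases eq_or_ne j i with rfl | hj
        · simp; omega
        · simp [Finsupp.single_apply, Ne.symm hj]
      conv_lhs => rw [hs]
      rw [monomial_add_single, pow_one, map_mul, eval_X]
    rw [key]
    simp only [eval_monomial]
    ring

lemma euler {σ : Type*} [Fintype σ] [DecidableEq σ] (n : ℕ)
    (J : MvPolynomial σ ℂ) (hJ : J.IsHomogeneous n) (a : σ → ℂ) :
    ∑ i, a i * eval a (pderiv i J) = (n : ℂ) * eval a J := by
  conv_lhs => rw [J.as_sum]
  conv_rhs => rw [J.as_sum]
  simp only [map_sum, Finset.mul_sum]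
  rw [Finset.sum_comm]
  refine Finset.sum_congr rfl fun s hs => ?_
  have hw : ∑ i, (s i : ℂ) = (n : ℂ) := by
    have := hJ (mem_support_iff.mp hs)
    rw [Finsupp.weight_apply, Finsupp.sum_fintype] at this
    · rw [← this]; push_cast; simp [smul_eq_mul]
    · intro i; simp
  calc ∑ i, a i * eval a (pderiv i (monomial s (coeff s J)))
      = ∑ i, (s i : ℂ) * eval a (monomial s (coeff s J)) :=
        Finset.sum_congr rfl fun i _ => euler_monomial s _ a i
    _ = (∑ i, (s i : ℂ)) * eval a (monomial s (coeff s J)) := by rw [Finset.sum_mul]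
    _ = (n : ℂ) * eval a (monomial s (coeff s J)) := by rw [hw]

set_option maxHeartbeats 1000000 in
lemma sum_delta (d i : ℕ) (hi : i ≤ d) (g : Fin (d+1) → ℂ) (e1 e2 : Fin (d+1) → ℕ)
    (h1 : e1 ⟨d - i, by omega⟩ = 0) (h2 : e2 ⟨d - i, by omega⟩ = 0) :
    (∑ q : Fin (d+1),
      C (g q * (((d - (q:ℕ)).descFactorial i : ℕ) : ℂ) * (((q:ℕ).descFactorial (d - i) : ℕ) : ℂ))
        * (X 0 : MvPolynomial (Fin 2) ℂ) ^ (e1 q) * X 1 ^ (e2 q))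
      = C (g ⟨d - i, by omega⟩ * (i.factorial : ℂ) * ((d - i).factorial : ℂ)) := by
  have key := Finset.sum_eq_single_of_mem (s := (Finset.univ : Finset (Fin (d+1))))
    (f := fun q : Fin (d+1) =>
      C (g q * (((d - (q:ℕ)).descFactorial i : ℕ) : ℂ) * (((q:ℕ).descFactorial (d - i) : ℕ) : ℂ))
        * (X 0 : MvPolynomial (Fin 2) ℂ) ^ (e1 q) * X 1 ^ (e2 q))
    (⟨d - i, by omega⟩ : Fin (d+1)) (Finset.mem_univ _) ?_
  · rw [key]
    simp [h1, h2, Nat.sub_sub_self hi, Nat.descFactorial_self]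
  · intro q _ hq
    have hne : (q : ℕ) ≠ d - i := fun h => hq (Fin.ext h)
    rcases lt_or_gt_of_ne hne with h | h
    · have hz : ((((q:ℕ)).descFactorial (d - i) : ℕ) : ℂ) = 0 := by
        rw [Nat.descFactorial_eq_zero_iff_lt.mpr h]; norm_num
      simp [hz]
    · have hlt : d - (q : ℕ) < i := by omega
      have hz : (((d - (q:ℕ)).descFactorial i : ℕ) : ℂ) = 0 := by
        rw [Nat.descFactorial_eq_zero_iff_lt.mpr hlt]; norm_num
      simp [hz]

set_option maxHeartbeats 2000000 in
/-- for `A = Σ_p C(d,p) a_p x0^{d−p} x1^p` and `J` an invariant of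
degree `n` in the coefficients `a_p`, the first evectant
`Ev_J = ((−1)^d/n) Σ_q (−1)^q (∂J/∂a_q) x0^q x1^{d−q}` satisfies `(Ev_J, A)_d = J`.
(Stated for every specialization `a` of the coefficients.) -/
theorem evectant_pairing (d n : ℕ) (hn : 0 < n)
    (J : MvPolynomial (Fin (d + 1)) ℂ) (hJ : J.IsHomogeneous n)
    (a : Fin (d + 1) → ℂ) :
    transv d d d
      (C ((-1 : ℂ) ^ d / (n : ℂ)) *
        ∑ q : Fin (d + 1),
          C ((-1 : ℂ) ^ (q : ℕ) * eval a (pderiv q J)) *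
            X 0 ^ (q : ℕ) * X 1 ^ (d - (q : ℕ)))
      (∑ p : Fin (d + 1),
        C ((d.choose (p : ℕ) : ℂ) * a p) * X 0 ^ (d - (p : ℕ)) * X 1 ^ (p : ℕ)) =
    C (eval a J) := by
  rw [transv]
  have hE : ∀ i, i ≤ d →
      pd 0 (d - i) (pd 1 i (C ((-1 : ℂ) ^ d / (n : ℂ)) *
        ∑ q : Fin (d + 1),
          C ((-1 : ℂ) ^ (q : ℕ) * eval a (pderiv q J)) *
            X 0 ^ (q : ℕ) * X 1 ^ (d - (q : ℕ)))) =
      C (((-1 : ℂ) ^ d / (n : ℂ)) *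
        ((fun q : Fin (d+1) => (-1 : ℂ) ^ (q : ℕ) * eval a (pderiv q J)) ⟨d - i, by omega⟩ *
          (i.factorial : ℂ) * ((d - i).factorial : ℂ))) := by
    intro i hi
    rw [pd_C_mul, pd_C_mul, pd_sum, pd_sum]
    have step : ∀ q : Fin (d + 1),
        pd 0 (d - i) (pd 1 i (C ((-1 : ℂ) ^ (q : ℕ) * eval a (pderiv q J)) *
          X 0 ^ (q : ℕ) * X 1 ^ (d - (q : ℕ)))) =
        C ((fun q : Fin (d+1) => (-1 : ℂ) ^ (q : ℕ) * eval a (pderiv q J)) q *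
            (((d - (q:ℕ)).descFactorial i : ℕ) : ℂ) * (((q:ℕ).descFactorial (d - i) : ℕ) : ℂ))
          * X 0 ^ ((q:ℕ) - (d - i)) * X 1 ^ ((d - (q:ℕ)) - i) := by
      intro q
      rw [pd1_spec, pd0_spec]
    rw [Finset.sum_congr rfl (fun q _ => step q),
      sum_delta d i hi _ (fun q => (q:ℕ) - (d - i)) (fun q => (d - (q:ℕ)) - i)
        (by simp) (by simp [Nat.sub_sub_self hi]), ← C_mul]
  have hF : ∀ i, i ≤ d →
      pd 1 (d - i) (pd 0 i (∑ p : Fin (d + 1),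
        C ((d.choose (p : ℕ) : ℂ) * a p) * X 0 ^ (d - (p : ℕ)) * X 1 ^ (p : ℕ))) =
      C ((fun p : Fin (d+1) => (d.choose (p : ℕ) : ℂ) * a p) ⟨d - i, by omega⟩ *
          (i.factorial : ℂ) * ((d - i).factorial : ℂ)) := by
    intro i hi
    rw [pd_sum, pd_sum]
    have step : ∀ p : Fin (d + 1),
        pd 1 (d - i) (pd 0 i (C ((d.choose (p : ℕ) : ℂ) * a p) *
          X 0 ^ (d - (p : ℕ)) * X 1 ^ (p : ℕ))) =
        C ((fun p : Fin (d+1) => (d.choose (p : ℕ) : ℂ) * a p) p *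
            (((d - (p:ℕ)).descFactorial i : ℕ) : ℂ) * (((p:ℕ).descFactorial (d - i) : ℕ) : ℂ))
          * X 0 ^ ((d - (p:ℕ)) - i) * X 1 ^ ((p:ℕ) - (d - i)) := by
      intro p
      rw [pd0_spec, pd1_spec]
    rw [Finset.sum_congr rfl (fun p _ => step p),
      sum_delta d i hi _ (fun p => (d - (p:ℕ)) - i) (fun p => (p:ℕ) - (d - i))
        (by simp [Nat.sub_sub_self hi]) (by simp)]
  rw [Finset.sum_congr rfl (fun i hi => by
    have hid : i ≤ d := by have := Finset.mem_range.mp hi; omega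
    rw [hE i hid, hF i hid])]
  simp only [← C_mul, ← map_sum]
  refine congrArg C ?_
  set g : ℕ → ℂ := fun j => if h : j < d + 1 then a ⟨j, h⟩ * eval a (pderiv ⟨j, h⟩ J) else 0
    with hg
  have hterm : ∀ x ∈ Finset.range (d + 1),
      (-1:ℂ)^x * (d.choose x : ℂ) *
        ((-1:ℂ)^d / (n:ℂ) * ((-1:ℂ)^(d-x) * eval a (pderiv (⟨d - x, by omega⟩ : Fin (d+1)) J)
          * (x.factorial : ℂ) * ((d-x).factorial : ℂ))) *
        ((d.choose (d-x) : ℂ) * a ⟨d - x, by omega⟩ * (x.factorial : ℂ) * ((d-x).factorial : ℂ))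
      = (d.factorial : ℂ) * (d.factorial : ℂ) / (n : ℂ) * g (d - x) := by
    intro x hx
    have hid : x ≤ d := by have := Finset.mem_range.mp hx; omega
    have hgv : g (d - x) = a ⟨d - x, by omega⟩ *
        eval a (pderiv (⟨d - x, by omega⟩ : Fin (d+1)) J) := dif_pos (by omega)
    rw [hgv]
    have h1 : ((d.choose x : ℂ) * (x.factorial : ℂ) * ((d-x).factorial : ℂ)) = (d.factorial : ℂ) := by
      exact_mod_cast Nat.choose_mul_factorial_mul_factorial hid
    have h2 : ((d.choose (d-x) : ℂ) * (x.factorial : ℂ) * ((d-x).factorial : ℂ)) = (d.factorial : ℂ) := by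
      rw [Nat.choose_symm hid]; exact h1
    have h3 : (-1:ℂ)^x * (-1:ℂ)^(d-x) * (-1:ℂ)^d = 1 := by
      rw [← pow_add, ← pow_add]
      exact Even.neg_one_pow ⟨d, by omega⟩
    calc (-1:ℂ)^x * (d.choose x : ℂ) *
        ((-1:ℂ)^d / (n:ℂ) * ((-1:ℂ)^(d-x) * eval a (pderiv (⟨d - x, by omega⟩ : Fin (d+1)) J)
          * (x.factorial : ℂ) * ((d-x).factorial : ℂ))) *
        ((d.choose (d-x) : ℂ) * a ⟨d - x, by omega⟩ * (x.factorial : ℂ) * ((d-x).factorial : ℂ))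
        = ((-1:ℂ)^x * (-1:ℂ)^(d-x) * (-1:ℂ)^d) *
          (((d.choose x : ℂ) * (x.factorial : ℂ) * ((d-x).factorial : ℂ)) *
            (((d.choose (d-x) : ℂ) * (x.factorial : ℂ) * ((d-x).factorial : ℂ)) *
              (a ⟨d - x, by omega⟩ * eval a (pderiv (⟨d - x, by omega⟩ : Fin (d+1)) J))) / (n:ℂ)) := by
          ring
      _ = _ := by rw [h1, h2, h3]; ring
  rw [Finset.sum_congr rfl hterm, ← Finset.mul_sum]
  have hrefl : ∑ x ∈ Finset.range (d + 1), g (d - x) = ∑ x ∈ Finset.range (d + 1), g x := by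
    have := Finset.sum_range_reflect g (d + 1)
    simpa using this
  rw [hrefl, ← Fin.sum_univ_eq_sum_range g (d + 1)]
  have hgv2 : ∀ i : Fin (d + 1), g (i : ℕ) = a i * eval a (pderiv i J) := by
    intro i
    rw [hg]
    simp only [dif_pos i.isLt, Fin.eta]
  rw [Finset.sum_congr rfl (fun i _ => hgv2 i), euler n J hJ a]
  have hd0 : ((d.factorial : ℂ)) ≠ 0 := by exact_mod_cast d.factorial_ne_zero
  have hn0 : ((n : ℂ)) ≠ 0 := by exact_mod_cast hn.ne'
  rw [Nat.sub_self]
  simp only [Nat.factorial_zero, Nat.mul_one, Nat.cast_one, Nat.cast_mul]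
  field_simp
end

section
/- For d = 2 and binary quadratics A, B, the relation ((A,B)₁, A)₁ + (1/2)(A,B)₂·A = (1/2)(A,A)₂·B holds identically. -/
open MvPolynomial

lemma fs_ne_01 : (Finsupp.single 0 2 : Fin 2 →₀ ℕ) ≠ Finsupp.single 0 1 + Finsupp.single 1 1 := by
  intro h; have := DFunLike.congr_fun h 1; simp at this
lemma fs_ne_02 : (Finsupp.single 0 2 : Fin 2 →₀ ℕ) ≠ Finsupp.single 1 2 := by
  intro h; have := DFunLike.congr_fun h 0; simp at this
lemma fs_ne_12 : (Finsupp.single 0 1 + Finsupp.single 1 1 : Fin 2 →₀ ℕ) ≠ Finsupp.single 1 2 := by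
  intro h; have := DFunLike.congr_fun h 0; simp at this

/-- Every binary quadratic decomposes into its three monomials. -/
lemma quad_decomp (P : MvPolynomial (Fin 2) ℂ) (hP : P.IsHomogeneous 2) :
    ∃ a b c : ℂ, P = C a * X 0 * X 0 + C b * X 0 * X 1 + C c * X 1 * X 1 := by
  refine ⟨coeff (Finsupp.single 0 2) P,
    coeff (Finsupp.single 0 1 + Finsupp.single 1 1) P, coeff (Finsupp.single 1 2) P, ?_⟩
  ext m
  have hm : m = Finsupp.single 0 (m 0) + Finsupp.single 1 (m 1) := by
    ext i; fin_cases i <;> simp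
  have hdeg : m.degree = m 0 + m 1 := by
    rw [Finsupp.degree_apply, Finset.sum_subset (Finset.subset_univ _)
      (fun x _ hx => Finsupp.notMem_support_iff.mp hx), Fin.sum_univ_two]
  have hXX : (X 0 * X 0 : MvPolynomial (Fin 2) ℂ) = monomial (Finsupp.single 0 2) 1 := by
    rw [← pow_two, X_pow_eq_monomial]
  have hXY : (X 0 * X 1 : MvPolynomial (Fin 2) ℂ)
      = monomial (Finsupp.single 0 1 + Finsupp.single 1 1) 1 := by
    rw [← pow_one (X 0), ← pow_one (X 1), X_pow_eq_monomial, X_pow_eq_monomial,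
      monomial_mul, one_mul]
  have hYY : (X 1 * X 1 : MvPolynomial (Fin 2) ℂ) = monomial (Finsupp.single 1 2) 1 := by
    rw [← pow_two, X_pow_eq_monomial]
  rw [mul_assoc, mul_assoc, mul_assoc, hXX, hXY, hYY]
  simp only [coeff_add, coeff_C_mul, coeff_monomial]
  by_cases h : m 0 + m 1 = 2
  · have h2 : m 0 ≤ 2 := by omega
    interval_cases h0 : m 0
    · have h1 : m 1 = 2 := by omega
      rw [h1] at hm
      simp only [Finsupp.single_zero, zero_add] at hm
      rw [hm, if_neg fs_ne_02, if_neg fs_ne_12, if_pos rfl]; ring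
    · have h1 : m 1 = 1 := by omega
      rw [h1] at hm
      rw [hm, if_neg fs_ne_01, if_pos rfl, if_neg (Ne.symm fs_ne_12)]
      ring
    · have h1 : m 1 = 0 := by omega
      rw [h1] at hm
      simp only [Finsupp.single_zero, add_zero] at hm
      rw [hm, if_pos rfl, if_neg (Ne.symm fs_ne_01), if_neg (Ne.symm fs_ne_02)]
      ring
  · have e1 : (Finsupp.single 0 2 : Fin 2 →₀ ℕ) ≠ m := by rintro rfl; simp at h
    have e2 : (Finsupp.single 0 1 + Finsupp.single 1 1 : Fin 2 →₀ ℕ) ≠ m := by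
      rintro rfl; simp at h
    have e3 : (Finsupp.single 1 2 : Fin 2 →₀ ℕ) ≠ m := by rintro rfl; simp at h
    rw [hP.coeff_eq_zero (by omega), if_neg e1, if_neg e2, if_neg e3]; ring

/-- for binary quadratics A, B,
`((A,B)₁, A)₁ + (1/2)(A,B)₂·A = (1/2)(A,A)₂·B`. -/
theorem quadratic_gordan_identity (A B : MvPolynomial (Fin 2) ℂ)
    (hA : A.IsHomogeneous 2) (hB : B.IsHomogeneous 2) :
    transv 2 2 1 (transv 2 2 1 A B) A +
        ((1 : ℂ) / 2) • (transv 2 2 2 A B * A) =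
      ((1 : ℂ) / 2) • (transv 2 2 2 A A * B) := by
  obtain ⟨a, b, c, rfl⟩ := quad_decomp A hA
  obtain ⟨d, e, f, rfl⟩ := quad_decomp B hB
  apply MvPolynomial.funext
  intro x
  simp only [transv, pd, Finset.sum_range_succ, Finset.sum_range_zero,
    Function.iterate_succ_apply', Function.iterate_zero_apply, map_add, map_mul,
    pderiv_X_self, pderiv_X_of_ne, pderiv_C, eval_add, eval_mul, eval_C, eval_X,
    smul_eq_C_mul]
  norm_num
  ring
end

section
/- Let A, B be binary quadratics with (A,A)₂ ≠ 0. Then B' := −(2/(A,A)₂)·(A,(A,B)₁)₁ satisfies B' = B − ((A,B)₂/(A,A)₂)·A; in particular (A,B')₁ = (A,B)₁. -/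
open MvPolynomial

noncomputable def q (a b c : ℂ) : MvPolynomial (Fin 2) ℂ :=
  C a * X 0 ^ 2 + C b * (X 0 * X 1) + C c * X 1 ^ 2

lemma decomp (P : MvPolynomial (Fin 2) ℂ) (hP : P.IsHomogeneous 2) :
    P = q (coeff (Finsupp.single 0 2) P)
        (coeff (Finsupp.single 0 1 + Finsupp.single 1 1) P)
        (coeff (Finsupp.single 1 2) P) := by
  have hX : (X 0 * X 1 : MvPolynomial (Fin 2) ℂ)
      = monomial (Finsupp.single 0 1 + Finsupp.single 1 1) 1 := by
    rw [X, X, monomial_mul, one_mul]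
  rw [q]
  ext m
  rw [X_pow_eq_monomial, X_pow_eq_monomial, hX]
  simp only [coeff_add, coeff_C_mul, coeff_monomial]
  by_cases h0 : m 0 + m 1 = 2
  · have hb : m 0 ≤ 2 := by omega
    have hm : m = Finsupp.single 0 2 ∨ m = Finsupp.single 0 1 + Finsupp.single 1 1
        ∨ m = Finsupp.single 1 2 := by
      interval_cases h : m 0
      · right; right
        ext i; fin_cases i <;> simp [h, Finsupp.single_apply] <;> omega
      · right; left
        ext i; fin_cases i <;> simp [h, Finsupp.single_apply] <;> omega
      · left
        ext i; fin_cases i <;> simp [h, Finsupp.single_apply] <;> omega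
    rcases hm with h | h | h <;> subst h <;>
      simp [Finsupp.single_eq_single_iff, Finsupp.ext_iff, Fin.forall_fin_two,
        Finsupp.single_apply]
  · have hz : coeff m P = 0 := by
      by_contra hc
      have := hP hc
      rw [Finsupp.weight_apply] at this
      simp [Finsupp.sum_fintype, Fin.sum_univ_two] at this
      omega
    rw [hz, if_neg, if_neg, if_neg]
    · simp
    · intro h; rw [← h] at h0; simp at h0
    · intro h; rw [← h] at h0; simp [Finsupp.single_apply] at h0
    · intro h; rw [← h] at h0; simp at h0

lemma tv22 (a b c d e f : ℂ) :
    transv 2 2 2 (q a b c) (q d e f) = C (a*f - b*e/2 + c*d) := by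
  simp only [transv, pd, q, pow_two, Finset.sum_range_succ, Finset.sum_range_zero,
    Function.iterate_succ, Function.iterate_zero, Function.comp_apply, id_eq]
  simp only [map_add, map_mul, pderiv_C, pderiv_X_self,
    pderiv_X_of_ne (by decide : (0:Fin 2) ≠ 1), pderiv_X_of_ne (by decide : (1:Fin 2) ≠ 0)]
  apply MvPolynomial.funext
  intro x
  simp [Nat.factorial]
  ring


set_option maxHeartbeats 1600000 in
/-- for binary quadratics A, B with `(A,A)₂ ≠ 0`,
`B' := −(2/(A,A)₂)·(A,(A,B)₁)₁` satisfies `B' = B − ((A,B)₂/(A,A)₂)·A`, and in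
particular `(A,B')₁ = (A,B)₁`. (Here the degree-0 transvectants are identified
with their constant coefficients.) -/
theorem quadratic_reduction_formula (A B : MvPolynomial (Fin 2) ℂ)
    (hA : A.IsHomogeneous 2) (hB : B.IsHomogeneous 2)
    (hAA : coeff 0 (transv 2 2 2 A A) ≠ 0) :
    (-(2 / coeff 0 (transv 2 2 2 A A))) • transv 2 2 1 A (transv 2 2 1 A B) =
        B - (coeff 0 (transv 2 2 2 A B) / coeff 0 (transv 2 2 2 A A)) • A ∧
      transv 2 2 1 A
          ((-(2 / coeff 0 (transv 2 2 2 A A))) •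
            transv 2 2 1 A (transv 2 2 1 A B)) =
        transv 2 2 1 A B := by
  obtain ⟨a, b, c, rfl⟩ : ∃ a b c, A = q a b c := ⟨_, _, _, decomp A hA⟩
  obtain ⟨d, e, f, rfl⟩ : ∃ d e f, B = q d e f := ⟨_, _, _, decomp B hB⟩
  rw [tv22] at hAA ⊢
  rw [tv22]
  rw [coeff_zero_C] at hAA ⊢
  rw [coeff_zero_C]
  set k : ℂ := a * c - b * b / 2 + c * a with hk
  have h1 : (-(2 / k)) • transv 2 2 1 (q a b c) (transv 2 2 1 (q a b c) (q d e f)) =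
      q d e f - ((a * f - b * e / 2 + c * d) / k) • q a b c := by
    apply MvPolynomial.funext
    intro x
    simp only [transv, pd, q, pow_two, Finset.sum_range_succ, Finset.sum_range_zero,
      Function.iterate_succ, Function.iterate_zero, Function.comp_apply, id_eq,
      smul_eq_C_mul]
    simp only [map_add, map_mul, pderiv_C, pderiv_X_self,
      pderiv_X_of_ne (by decide : (0:Fin 2) ≠ 1), pderiv_X_of_ne (by decide : (1:Fin 2) ≠ 0),
      map_sub, map_zero, map_one, mul_zero, zero_mul, add_zero, zero_add]
    simp [Nat.factorial]
    field_simp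
    rw [hk]
    ring
  refine ⟨h1, ?_⟩
  rw [h1]
  apply MvPolynomial.funext
  intro x
  simp only [transv, pd, q, pow_two, Finset.sum_range_succ, Finset.sum_range_zero,
    Function.iterate_succ, Function.iterate_zero, Function.comp_apply, id_eq,
    smul_eq_C_mul]
  simp only [map_add, map_mul, pderiv_C, pderiv_X_self,
    pderiv_X_of_ne (by decide : (0:Fin 2) ≠ 1), pderiv_X_of_ne (by decide : (1:Fin 2) ≠ 0),
    map_sub, map_zero, map_one, mul_zero, zero_mul, add_zero, zero_add]
  simp [Nat.factorial]
  field_simp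
  rw [hk]
  ring
end

section
/- (Jacobian predicate, d = 3.) Let A be a binary cubic and M a binary quartic. There exists a binary cubic B with (A,B)₁ = M if and only if ((A,M)₂, A)₁ = 0. -/
open MvPolynomial

noncomputable def cub (a0 a1 a2 a3 : ℂ) : MvPolynomial (Fin 2) ℂ :=
  C a0 * (X 0 ^ 3 * X 1 ^ 0) + C a1 * (X 0 ^ 2 * X 1 ^ 1) +
  C a2 * (X 0 ^ 1 * X 1 ^ 2) + C a3 * (X 0 ^ 0 * X 1 ^ 3)

noncomputable def qua (m0 m1 m2 m3 m4 : ℂ) : MvPolynomial (Fin 2) ℂ :=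
  C m0 * (X 0 ^ 4 * X 1 ^ 0) + C m1 * (X 0 ^ 3 * X 1 ^ 1) +
  C m2 * (X 0 ^ 2 * X 1 ^ 2) + C m3 * (X 0 ^ 1 * X 1 ^ 3) + C m4 * (X 0 ^ 0 * X 1 ^ 4)

lemma pderiv_natCast (i : Fin 2) (n : ℕ) :
    pderiv i ((n : ℕ) : MvPolynomial (Fin 2) ℂ) = 0 := by
  rw [← map_natCast (C : ℂ →+* MvPolynomial (Fin 2) ℂ) n, pderiv_C]

lemma pderiv_ofNat (i : Fin 2) (n : ℕ) [n.AtLeastTwo] :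
    pderiv i (no_index (OfNat.ofNat n) : MvPolynomial (Fin 2) ℂ) = 0 := by
  rw [← map_ofNat (C : ℂ →+* MvPolynomial (Fin 2) ℂ) n, pderiv_C]

lemma transv331 (a0 a1 a2 a3 b0 b1 b2 b3 : ℂ) :
    transv 3 3 1 (cub a0 a1 a2 a3) (cub b0 b1 b2 b3) =
      C ((9:ℂ))⁻¹ * qua (-3*a1*b0 + 3*a0*b1) (-6*a2*b0 + 6*a0*b2)
        (-9*a3*b0 - 3*a2*b1 + 3*a1*b2 + 9*a0*b3) (-6*a3*b1 + 6*a1*b3)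
        (-3*a3*b2 + 3*a2*b3) := by
  simp only [transv, pd, cub, qua, Finset.sum_range_succ, Finset.sum_range_zero,
    Function.iterate_one, Function.iterate_zero, id_eq, Nat.factorial]
  norm_num [pderiv_mul, pderiv_pow, pderiv_X, pderiv_C_mul, map_ofNat, pderiv_ofNat,
    pderiv_natCast, pderiv_one]
  ring

set_option maxHeartbeats 2000000 in
lemma transv342 (a0 a1 a2 a3 m0 m1 m2 m3 m4 : ℂ) :
    transv 3 4 2 (cub a0 a1 a2 a3) (qua m0 m1 m2 m3 m4) =
      C ((72:ℂ))⁻¹ * cub (24*a2*m0 - 12*a1*m1 + 12*a0*m2)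
        (72*a3*m0 - 12*a1*m2 + 36*a0*m3)
        (36*a3*m1 - 12*a2*m2 + 72*a0*m4)
        (12*a3*m2 - 12*a2*m3 + 24*a1*m4) := by
  simp only [transv, pd, cub, qua, Finset.sum_range_succ, Finset.sum_range_zero,
    Function.iterate_one, Function.iterate_zero, Function.iterate_succ_apply', id_eq,
    Nat.factorial]
  norm_num [pderiv_mul, pderiv_pow, pderiv_X, pderiv_C_mul, map_ofNat, pderiv_ofNat,
    pderiv_natCast, pderiv_one]
  ring

lemma transv_C_mul_left (e f r : ℕ) (c : ℂ) (E F : MvPolynomial (Fin 2) ℂ) :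
    transv e f r (C c * E) F = C c * transv e f r E F := by
  simp only [transv, pd_C_mul, Finset.mul_sum]
  exact Finset.sum_congr rfl fun i _ => by ring

lemma transv_C_mul_right (e f r : ℕ) (c : ℂ) (E F : MvPolynomial (Fin 2) ℂ) :
    transv e f r E (C c * F) = C c * transv e f r E F := by
  simp only [transv, pd_C_mul, Finset.mul_sum]
  exact Finset.sum_congr rfl fun i _ => by ring

noncomputable def ee (k l : ℕ) : Fin 2 →₀ ℕ := Finsupp.single 0 k + Finsupp.single 1 l

lemma ee_apply0 (k l : ℕ) : ee k l 0 = k := by simp [ee]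
lemma ee_apply1 (k l : ℕ) : ee k l 1 = l := by simp [ee]

lemma fin2_eq_ee (d : Fin 2 →₀ ℕ) : d = ee (d 0) (d 1) := by
  ext i
  fin_cases i
  · simp [ee]
  · simp [ee]

lemma coeff_term (k l p q : ℕ) (c : ℂ) :
    coeff (ee k l) (C c * (X 0 ^ p * X 1 ^ q) : MvPolynomial (Fin 2) ℂ) =
      if k = p ∧ l = q then c else 0 := by
  rw [X_pow_eq_monomial, X_pow_eq_monomial, monomial_mul, mul_one, coeff_C_mul,
    show Finsupp.single (0 : Fin 2) p + Finsupp.single 1 q = ee p q from rfl, coeff_monomial]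
  by_cases h : k = p ∧ l = q
  · obtain ⟨rfl, rfl⟩ := h
    simp
  · rw [if_neg h, if_neg, mul_zero]
    intro he
    exact h ⟨by rw [← ee_apply0 k l, ← he, ee_apply0], by rw [← ee_apply1 k l, ← he, ee_apply1]⟩

lemma degree_ee (k l : ℕ) : (ee k l).degree = k + l := by
  rw [Finsupp.degree_apply, Finset.sum_subset (Finset.subset_univ _) (by simp)]
  rw [Fin.sum_univ_two, ee_apply0, ee_apply1]

lemma rep (n : ℕ) (P : MvPolynomial (Fin 2) ℂ) (h : P.IsHomogeneous n) :
    P = ∑ i ∈ Finset.range (n + 1), C (coeff (ee (n - i) i) P) * (X 0 ^ (n - i) * X 1 ^ i) := by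
  ext d
  rw [fin2_eq_ee d, coeff_sum]
  simp only [coeff_term]
  set k := d 0; set l := d 1
  by_cases hkl : k + l = n
  · rw [Finset.sum_eq_single l]
    · have hk : n - l = k := by omega
      rw [if_pos ⟨hk.symm, rfl⟩, hk]
    · intro i _ hi
      rw [if_neg]; rintro ⟨-, rfl⟩; exact hi rfl
    · intro hl
      exact absurd (Finset.mem_range.mpr (by omega)) hl
  · rw [Finset.sum_eq_zero, h.coeff_eq_zero (by rw [degree_ee]; exact hkl)]
    intro i hi
    rw [if_neg]
    rintro ⟨h1, h2⟩
    rw [Finset.mem_range] at hi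
    omega

lemma rep3 (P : MvPolynomial (Fin 2) ℂ) (h : P.IsHomogeneous 3) :
    P = cub (coeff (ee 3 0) P) (coeff (ee 2 1) P) (coeff (ee 1 2) P) (coeff (ee 0 3) P) := by
  conv_lhs => rw [rep 3 P h]
  simp [cub, Finset.sum_range_succ]

lemma rep4 (P : MvPolynomial (Fin 2) ℂ) (h : P.IsHomogeneous 4) :
    P = qua (coeff (ee 4 0) P) (coeff (ee 3 1) P) (coeff (ee 2 2) P) (coeff (ee 1 3) P)
          (coeff (ee 0 4) P) := by
  conv_lhs => rw [rep 4 P h]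
  simp [qua, Finset.sum_range_succ]

lemma qua_eq_zero {c0 c1 c2 c3 c4 : ℂ} (h : qua c0 c1 c2 c3 c4 = 0) :
    c0 = 0 ∧ c1 = 0 ∧ c2 = 0 ∧ c3 = 0 ∧ c4 = 0 := by
  refine ⟨?_, ?_, ?_, ?_, ?_⟩
  · have hh := congrArg (coeff (ee 4 0)) h
    simp only [qua, coeff_add, coeff_term, coeff_zero] at hh
    norm_num at hh
    exact hh
  · have hh := congrArg (coeff (ee 3 1)) h
    simp only [qua, coeff_add, coeff_term, coeff_zero] at hh
    norm_num at hh
    exact hh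
  · have hh := congrArg (coeff (ee 2 2)) h
    simp only [qua, coeff_add, coeff_term, coeff_zero] at hh
    norm_num at hh
    exact hh
  · have hh := congrArg (coeff (ee 1 3)) h
    simp only [qua, coeff_add, coeff_term, coeff_zero] at hh
    norm_num at hh
    exact hh
  · have hh := congrArg (coeff (ee 0 4)) h
    simp only [qua, coeff_add, coeff_term, coeff_zero] at hh
    norm_num at hh
    exact hh

lemma qua_sub (c0 c1 c2 c3 c4 d0 d1 d2 d3 d4 : ℂ) :
    qua (c0-d0) (c1-d1) (c2-d2) (c3-d3) (c4-d4) = qua c0 c1 c2 c3 c4 - qua d0 d1 d2 d3 d4 := by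
  simp only [qua, map_sub]
  ring

lemma qua_inj {c0 c1 c2 c3 c4 d0 d1 d2 d3 d4 : ℂ}
    (h : qua c0 c1 c2 c3 c4 = qua d0 d1 d2 d3 d4) :
    c0 = d0 ∧ c1 = d1 ∧ c2 = d2 ∧ c3 = d3 ∧ c4 = d4 := by
  have h0 : qua (c0-d0) (c1-d1) (c2-d2) (c3-d3) (c4-d4) = 0 := by
    rw [qua_sub, h, sub_self]
  obtain ⟨e0, e1, e2, e3, e4⟩ := qua_eq_zero h0
  exact ⟨sub_eq_zero.mp e0, sub_eq_zero.mp e1, sub_eq_zero.mp e2, sub_eq_zero.mp e3,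
    sub_eq_zero.mp e4⟩

lemma C_mul_qua (c c0 c1 c2 c3 c4 : ℂ) :
    C c * qua c0 c1 c2 c3 c4 = qua (c*c0) (c*c1) (c*c2) (c*c3) (c*c4) := by
  simp only [qua, map_mul]
  ring

lemma C_mul_cub (c c0 c1 c2 c3 : ℂ) :
    C c * cub c0 c1 c2 c3 = cub (c*c0) (c*c1) (c*c2) (c*c3) := by
  simp only [cub, map_mul]
  ring

lemma ee_def (p q : ℕ) : Finsupp.single (0:Fin 2) p + Finsupp.single 1 q = ee p q := rfl

lemma isHomog_term (c : ℂ) (p q n : ℕ) (h : p + q = n) :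
    (C c * (X 0 ^ p * X 1 ^ q) : MvPolynomial (Fin 2) ℂ).IsHomogeneous n := by
  rw [X_pow_eq_monomial, X_pow_eq_monomial, monomial_mul, mul_one, C_mul_monomial, mul_one,
    ee_def]
  exact isHomogeneous_monomial _ (by rw [degree_ee]; exact h)

lemma cub_isHomogeneous (a0 a1 a2 a3 : ℂ) : (cub a0 a1 a2 a3).IsHomogeneous 3 :=
  (((isHomog_term a0 3 0 3 rfl).add (isHomog_term a1 2 1 3 rfl)).add
    (isHomog_term a2 1 2 3 rfl)).add (isHomog_term a3 0 3 3 rfl)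

set_option maxHeartbeats 4000000 in
/-- Jacobian predicate, d = 3: for a binary cubic A ≠ 0 and a
binary quartic M, there exists a cubic B with `(A,B)₁ = M` iff `((A,M)₂,A)₁ = 0`. -/
theorem jacobian_predicate_deg_three (A M : MvPolynomial (Fin 2) ℂ)
    (hA : A.IsHomogeneous 3) (hA0 : A ≠ 0) (hM : M.IsHomogeneous 4) :
    (∃ B : MvPolynomial (Fin 2) ℂ, B.IsHomogeneous 3 ∧ transv 3 3 1 A B = M) ↔
      transv 3 3 1 (transv 3 4 2 A M) A = 0 := by
  obtain ⟨a0, a1, a2, a3, rfl⟩ : ∃ a0 a1 a2 a3, A = cub a0 a1 a2 a3 :=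
    ⟨_, _, _, _, rep3 A hA⟩
  obtain ⟨m0, m1, m2, m3, m4, rfl⟩ : ∃ m0 m1 m2 m3 m4, M = qua m0 m1 m2 m3 m4 :=
    ⟨_, _, _, _, _, rep4 M hM⟩
  have hQ : transv 3 3 1 (transv 3 4 2 (cub a0 a1 a2 a3) (qua m0 m1 m2 m3 m4)) (cub a0 a1 a2 a3) =
      C ((648:ℂ))⁻¹ * qua (72*a1*a2*m0 - 36*a1*a1*m1 - 216*a0*a3*m0 + 72*a0*a1*m2 - 108*a0*a0*m3)
        (144*a2*a2*m0 - 72*a1*a2*m1 - 216*a0*a3*m1 + 144*a0*a2*m2 - 432*a0*a0*m4)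
        (432*a2*a3*m0 - 216*a1*a3*m1 + 216*a0*a2*m3 - 432*a0*a1*m4)
        (432*a3*a3*m0 - 144*a1*a3*m2 + 72*a1*a2*m3 - 144*a1*a1*m4 + 216*a0*a3*m3)
        (108*a3*a3*m1 - 72*a2*a3*m2 + 36*a2*a2*m3 - 72*a1*a2*m4 + 216*a0*a3*m4) := by
    rw [transv342, transv_C_mul_left, transv331, ← mul_assoc, ← C_mul]
    have h9 : ((72:ℂ))⁻¹ * ((9:ℂ))⁻¹ = ((648:ℂ))⁻¹ := by norm_num
    rw [h9]
    congr 1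
    simp only [qua, map_add, map_sub, map_mul, map_neg, map_ofNat]
    ring
  constructor
  · rintro ⟨B, hBh, hBt⟩
    obtain ⟨b0, b1, b2, b3, rfl⟩ : ∃ b0 b1 b2 b3, B = cub b0 b1 b2 b3 :=
      ⟨_, _, _, _, rep3 B hBh⟩
    rw [transv331] at hBt
    rw [C_mul_qua] at hBt
    obtain ⟨hm0, hm1, hm2, hm3, hm4⟩ := qua_inj hBt
    have e0 : (72*a1*a2*m0 - 36*a1*a1*m1 - 216*a0*a3*m0 + 72*a0*a1*m2 - 108*a0*a0*m3 : ℂ) = 0 := by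
      linear_combination (-(1:ℂ)) * (72*a1*a2 - 216*a0*a3) * hm0 + (-(1:ℂ)) * (-36*a1*a1) * hm1 + (-(1:ℂ)) * (72*a0*a1) * hm2 + (-(1:ℂ)) * (-108*a0*a0) * hm3
    have e1 : (144*a2*a2*m0 - 72*a1*a2*m1 - 216*a0*a3*m1 + 144*a0*a2*m2 - 432*a0*a0*m4 : ℂ) = 0 := by
      linear_combination (-(1:ℂ)) * (144*a2*a2) * hm0 + (-(1:ℂ)) * (-72*a1*a2 - 216*a0*a3) * hm1 + (-(1:ℂ)) * (144*a0*a2) * hm2 + (-(1:ℂ)) * (-432*a0*a0) * hm4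
    have e2 : (432*a2*a3*m0 - 216*a1*a3*m1 + 216*a0*a2*m3 - 432*a0*a1*m4 : ℂ) = 0 := by
      linear_combination (-(1:ℂ)) * (432*a2*a3) * hm0 + (-(1:ℂ)) * (-216*a1*a3) * hm1 + (-(1:ℂ)) * (216*a0*a2) * hm3 + (-(1:ℂ)) * (-432*a0*a1) * hm4
    have e3 : (432*a3*a3*m0 - 144*a1*a3*m2 + 72*a1*a2*m3 - 144*a1*a1*m4 + 216*a0*a3*m3 : ℂ) = 0 := by
      linear_combination (-(1:ℂ)) * (432*a3*a3) * hm0 + (-(1:ℂ)) * (-144*a1*a3) * hm2 + (-(1:ℂ)) * (72*a1*a2 + 216*a0*a3) * hm3 + (-(1:ℂ)) * (-144*a1*a1) * hm4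
    have e4 : (108*a3*a3*m1 - 72*a2*a3*m2 + 36*a2*a2*m3 - 72*a1*a2*m4 + 216*a0*a3*m4 : ℂ) = 0 := by
      linear_combination (-(1:ℂ)) * (108*a3*a3) * hm1 + (-(1:ℂ)) * (-72*a2*a3) * hm2 + (-(1:ℂ)) * (36*a2*a2) * hm3 + (-(1:ℂ)) * (-72*a1*a2 + 216*a0*a3) * hm4
    rw [hQ, e0, e1, e2, e3, e4]
    simp [qua]
  · intro h
    rw [hQ] at h
    rcases mul_eq_zero.mp h with h1 | h2
    · exact absurd ((C_eq_zero).mp h1) (by norm_num)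
    obtain ⟨hQ0, hQ1, hQ2, hQ3, hQ4⟩ := qua_eq_zero h2
    have hne : a0 ≠ 0 ∨ a1 ≠ 0 ∨ a2 ≠ 0 ∨ a3 ≠ 0 := by
      by_contra hc
      push_neg at hc
      obtain ⟨h0, h1', h2', h3'⟩ := hc
      exact hA0 (by rw [h0, h1', h2', h3']; simp [cub])
    rcases hne with ha | ha | ha | ha
    · have hs : (2*a0^2 : ℂ) ≠ 0 := by
        simp [pow_eq_zero_iff, ha]
      refine ⟨C ((2*a0^2 : ℂ))⁻¹ * cub 0 (6*a0*m0) (3*a0*m1) (2*a0*m2 + 2*a2*m0 - a1*m1), ?_, ?_⟩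
      · rw [C_mul_cub]
        exact cub_isHomogeneous _ _ _ _
      · rw [transv_C_mul_right, transv331]
        have e0 : (-3*a1*0 + 3*a0*(6*a0*m0) : ℂ) = 18*a0^2*m0 := by ring
        have e1 : (-6*a2*0 + 6*a0*(3*a0*m1) : ℂ) = 18*a0^2*m1 := by ring
        have e2 : (-9*a3*0 - 3*a2*(6*a0*m0) + 3*a1*(3*a0*m1) + 9*a0*(2*a0*m2 + 2*a2*m0 - a1*m1) : ℂ) = 18*a0^2*m2 := by ring
        have e3 : (-6*a3*(6*a0*m0) + 6*a1*(2*a0*m2 + 2*a2*m0 - a1*m1) : ℂ) = 18*a0^2*m3 := by linear_combination (1/6) * hQ0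
        have e4 : (-3*a3*(3*a0*m1) + 3*a2*(2*a0*m2 + 2*a2*m0 - a1*m1) : ℂ) = 18*a0^2*m4 := by linear_combination (1/24) * hQ1
        rw [e0, e1, e2, e3, e4,
          show qua (18*a0^2*m0) (18*a0^2*m1) (18*a0^2*m2) (18*a0^2*m3) (18*a0^2*m4)
              = C (18*a0^2 : ℂ) * qua m0 m1 m2 m3 m4 from (C_mul_qua _ _ _ _ _ _).symm,
          ← mul_assoc, ← mul_assoc, ← C_mul, ← C_mul]
        have hc : ((2*a0^2 : ℂ))⁻¹ * ((9:ℂ))⁻¹ * (18*a0^2) = 1 := by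
          field_simp
          ring
        rw [hc, C_1, one_mul]
    · have hs : (2*a1^2 : ℂ) ≠ 0 := by
        simp [pow_eq_zero_iff, ha]
      refine ⟨C ((2*a1^2 : ℂ))⁻¹ * cub (-6*a1*m0) 0 (6*a1*m2 - 18*a3*m0 - 9*a0*m3) (3*a1*m3), ?_, ?_⟩
      · rw [C_mul_cub]
        exact cub_isHomogeneous _ _ _ _
      · rw [transv_C_mul_right, transv331]
        have e0 : (-3*a1*(-6*a1*m0) + 3*a0*0 : ℂ) = 18*a1^2*m0 := by ring
        have e1 : (-6*a2*(-6*a1*m0) + 6*a0*(6*a1*m2 - 18*a3*m0 - 9*a0*m3) : ℂ) = 18*a1^2*m1 := by linear_combination (1/2) * hQ0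
        have e2 : (-9*a3*(-6*a1*m0) - 3*a2*0 + 3*a1*(6*a1*m2 - 18*a3*m0 - 9*a0*m3) + 9*a0*(3*a1*m3) : ℂ) = 18*a1^2*m2 := by ring
        have e3 : (-6*a3*0 + 6*a1*(3*a1*m3) : ℂ) = 18*a1^2*m3 := by ring
        have e4 : (-3*a3*(6*a1*m2 - 18*a3*m0 - 9*a0*m3) + 3*a2*(3*a1*m3) : ℂ) = 18*a1^2*m4 := by linear_combination (1/8) * hQ3
        rw [e0, e1, e2, e3, e4,
          show qua (18*a1^2*m0) (18*a1^2*m1) (18*a1^2*m2) (18*a1^2*m3) (18*a1^2*m4)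
              = C (18*a1^2 : ℂ) * qua m0 m1 m2 m3 m4 from (C_mul_qua _ _ _ _ _ _).symm,
          ← mul_assoc, ← mul_assoc, ← C_mul, ← C_mul]
        have hc : ((2*a1^2 : ℂ))⁻¹ * ((9:ℂ))⁻¹ * (18*a1^2) = 1 := by
          field_simp
          ring
        rw [hc, C_1, one_mul]
    · have hs : (2*a2^2 : ℂ) ≠ 0 := by
        simp [pow_eq_zero_iff, ha]
      refine ⟨C ((2*a2^2 : ℂ))⁻¹ * cub (-3*a2*m1) (-6*a2*m2 + 18*a0*m4 + 9*a3*m1) 0 (6*a2*m4), ?_, ?_⟩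
      · rw [C_mul_cub]
        exact cub_isHomogeneous _ _ _ _
      · rw [transv_C_mul_right, transv331]
        have e0 : (-3*a1*(-3*a2*m1) + 3*a0*(-6*a2*m2 + 18*a0*m4 + 9*a3*m1) : ℂ) = 18*a2^2*m0 := by linear_combination (-1/8) * hQ1
        have e1 : (-6*a2*(-3*a2*m1) + 6*a0*0 : ℂ) = 18*a2^2*m1 := by ring
        have e2 : (-9*a3*(-3*a2*m1) - 3*a2*(-6*a2*m2 + 18*a0*m4 + 9*a3*m1) + 3*a1*0 + 9*a0*(6*a2*m4) : ℂ) = 18*a2^2*m2 := by ring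
        have e3 : (-6*a3*(-6*a2*m2 + 18*a0*m4 + 9*a3*m1) + 6*a1*(6*a2*m4) : ℂ) = 18*a2^2*m3 := by linear_combination (-1/2) * hQ4
        have e4 : (-3*a3*0 + 3*a2*(6*a2*m4) : ℂ) = 18*a2^2*m4 := by ring
        rw [e0, e1, e2, e3, e4,
          show qua (18*a2^2*m0) (18*a2^2*m1) (18*a2^2*m2) (18*a2^2*m3) (18*a2^2*m4)
              = C (18*a2^2 : ℂ) * qua m0 m1 m2 m3 m4 from (C_mul_qua _ _ _ _ _ _).symm,
          ← mul_assoc, ← mul_assoc, ← C_mul, ← C_mul]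
        have hc : ((2*a2^2 : ℂ))⁻¹ * ((9:ℂ))⁻¹ * (18*a2^2) = 1 := by
          field_simp
          ring
        rw [hc, C_1, one_mul]
    · have hs : (2*a3^2 : ℂ) ≠ 0 := by
        simp [pow_eq_zero_iff, ha]
      refine ⟨C ((2*a3^2 : ℂ))⁻¹ * cub (-2*a3*m2 + a2*m3 - 2*a1*m4) (-3*a3*m3) (-6*a3*m4) 0, ?_, ?_⟩
      · rw [C_mul_cub]
        exact cub_isHomogeneous _ _ _ _
      · rw [transv_C_mul_right, transv331]
        have e0 : (-3*a1*(-2*a3*m2 + a2*m3 - 2*a1*m4) + 3*a0*(-3*a3*m3) : ℂ) = 18*a3^2*m0 := by linear_combination (-1/24) * hQ3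
        have e1 : (-6*a2*(-2*a3*m2 + a2*m3 - 2*a1*m4) + 6*a0*(-6*a3*m4) : ℂ) = 18*a3^2*m1 := by linear_combination (-1/6) * hQ4
        have e2 : (-9*a3*(-2*a3*m2 + a2*m3 - 2*a1*m4) - 3*a2*(-3*a3*m3) + 3*a1*(-6*a3*m4) + 9*a0*0 : ℂ) = 18*a3^2*m2 := by ring
        have e3 : (-6*a3*(-3*a3*m3) + 6*a1*0 : ℂ) = 18*a3^2*m3 := by ring
        have e4 : (-3*a3*(-6*a3*m4) + 3*a2*0 : ℂ) = 18*a3^2*m4 := by ring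
        rw [e0, e1, e2, e3, e4,
          show qua (18*a3^2*m0) (18*a3^2*m1) (18*a3^2*m2) (18*a3^2*m3) (18*a3^2*m4)
              = C (18*a3^2 : ℂ) * qua m0 m1 m2 m3 m4 from (C_mul_qua _ _ _ _ _ _).symm,
          ← mul_assoc, ← mul_assoc, ← C_mul, ← C_mul]
        have hc : ((2*a3^2 : ℂ))⁻¹ * ((9:ℂ))⁻¹ * (18*a3^2) = 1 := by
          field_simp
          ring
        rw [hc, C_1, one_mul]
end

section
/- For binary quartics A, B (d = 4), with T₁ = (A,B)₁, T₃ = (A,B)₃, the identity 25·(T₁,T₁)₄ − 10·(T₁,T₃)₂ − 4·T₃² = 0 holds. -/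
open MvPolynomial

lemma pd_zero' (i : Fin 2) (P : MvPolynomial (Fin 2) ℂ) : pd i 0 P = P := rfl
lemma pd_one' (i : Fin 2) (P : MvPolynomial (Fin 2) ℂ) : pd i 1 P = pderiv i P := rfl
lemma pd_two' (i : Fin 2) (P : MvPolynomial (Fin 2) ℂ) : pd i 2 P = pderiv i (pderiv i P) := rfl
lemma pd_three' (i : Fin 2) (P : MvPolynomial (Fin 2) ℂ) :
    pd i 3 P = pderiv i (pderiv i (pderiv i P)) := rfl
lemma pd_four' (i : Fin 2) (P : MvPolynomial (Fin 2) ℂ) :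
    pd i 4 P = pderiv i (pderiv i (pderiv i (pderiv i P))) := rfl

lemma pd_smul (i : Fin 2) (k : ℕ) (c : ℂ) (P : MvPolynomial (Fin 2) ℂ) :
    pd i k (c • P) = c • pd i k P := by
  induction k generalizing P with
  | zero => rfl
  | succ n ih =>
    rw [show pd i (n+1) (c • P) = pd i n (pderiv i (c • P)) from Function.iterate_succ_apply _ _ _,
      show pd i (n+1) P = pd i n (pderiv i P) from Function.iterate_succ_apply _ _ _,
      Derivation.map_smul, ih]

lemma transv_smul_left (e f r : ℕ) (c : ℂ) (E F : MvPolynomial (Fin 2) ℂ) :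
    transv e f r (c • E) F = c • transv e f r E F := by
  simp only [transv, pd_smul, smul_mul_assoc, mul_smul_comm, ← Finset.smul_sum]

lemma transv_smul_right (e f r : ℕ) (c : ℂ) (E F : MvPolynomial (Fin 2) ℂ) :
    transv e f r E (c • F) = c • transv e f r E F := by
  simp only [transv, pd_smul, smul_mul_assoc, mul_smul_comm, ← Finset.smul_sum]


lemma dx1 (c0 c1 : ℂ) :
    pderiv 0 (C (c0) * X 1 + C (c1) * X 0 : MvPolynomial (Fin 2) ℂ) = C (1 * c1) := by
  simp only [pderiv_mul, pderiv_C_mul, pderiv_pow, pderiv_X_self, map_add, pderiv_C, pderiv_X_of_ne (show (1:Fin 2) ≠ 0 by decide), pderiv_X_of_ne (show (0:Fin 2) ≠ 1 by decide)]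
  simp only [map_mul, map_ofNat, map_one]
  push_cast
  ring

lemma dy1 (c0 c1 : ℂ) :
    pderiv 1 (C (c0) * X 1 + C (c1) * X 0 : MvPolynomial (Fin 2) ℂ) = C (1 * c0) := by
  simp only [pderiv_mul, pderiv_C_mul, pderiv_pow, pderiv_X_self, map_add, pderiv_C, pderiv_X_of_ne (show (1:Fin 2) ≠ 0 by decide), pderiv_X_of_ne (show (0:Fin 2) ≠ 1 by decide)]
  simp only [map_mul, map_ofNat, map_one]
  push_cast
  ring

lemma dx2 (c0 c1 c2 : ℂ) :
    pderiv 0 (C (c0) * X 1 ^ 2 + C (c1) * X 0 * X 1 + C (c2) * X 0 ^ 2 : MvPolynomial (Fin 2) ℂ) = C (1 * c1) * X 1 + C (2 * c2) * X 0 := by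
  simp only [pderiv_mul, pderiv_C_mul, pderiv_pow, pderiv_X_self, map_add, pderiv_C, pderiv_X_of_ne (show (1:Fin 2) ≠ 0 by decide), pderiv_X_of_ne (show (0:Fin 2) ≠ 1 by decide)]
  simp only [map_mul, map_ofNat, map_one]
  push_cast
  ring

lemma dy2 (c0 c1 c2 : ℂ) :
    pderiv 1 (C (c0) * X 1 ^ 2 + C (c1) * X 0 * X 1 + C (c2) * X 0 ^ 2 : MvPolynomial (Fin 2) ℂ) = C (2 * c0) * X 1 + C (1 * c1) * X 0 := by
  simp only [pderiv_mul, pderiv_C_mul, pderiv_pow, pderiv_X_self, map_add, pderiv_C, pderiv_X_of_ne (show (1:Fin 2) ≠ 0 by decide), pderiv_X_of_ne (show (0:Fin 2) ≠ 1 by decide)]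
  simp only [map_mul, map_ofNat, map_one]
  push_cast
  ring

lemma dx3 (c0 c1 c2 c3 : ℂ) :
    pderiv 0 (C (c0) * X 1 ^ 3 + C (c1) * X 0 * X 1 ^ 2 + C (c2) * X 0 ^ 2 * X 1 + C (c3) * X 0 ^ 3 : MvPolynomial (Fin 2) ℂ) = C (1 * c1) * X 1 ^ 2 + C (2 * c2) * X 0 * X 1 + C (3 * c3) * X 0 ^ 2 := by
  simp only [pderiv_mul, pderiv_C_mul, pderiv_pow, pderiv_X_self, map_add, pderiv_C, pderiv_X_of_ne (show (1:Fin 2) ≠ 0 by decide), pderiv_X_of_ne (show (0:Fin 2) ≠ 1 by decide)]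
  simp only [map_mul, map_ofNat, map_one]
  push_cast
  ring

lemma dy3 (c0 c1 c2 c3 : ℂ) :
    pderiv 1 (C (c0) * X 1 ^ 3 + C (c1) * X 0 * X 1 ^ 2 + C (c2) * X 0 ^ 2 * X 1 + C (c3) * X 0 ^ 3 : MvPolynomial (Fin 2) ℂ) = C (3 * c0) * X 1 ^ 2 + C (2 * c1) * X 0 * X 1 + C (1 * c2) * X 0 ^ 2 := by
  simp only [pderiv_mul, pderiv_C_mul, pderiv_pow, pderiv_X_self, map_add, pderiv_C, pderiv_X_of_ne (show (1:Fin 2) ≠ 0 by decide), pderiv_X_of_ne (show (0:Fin 2) ≠ 1 by decide)]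
  simp only [map_mul, map_ofNat, map_one]
  push_cast
  ring

lemma dx4 (c0 c1 c2 c3 c4 : ℂ) :
    pderiv 0 (C (c0) * X 1 ^ 4 + C (c1) * X 0 * X 1 ^ 3 + C (c2) * X 0 ^ 2 * X 1 ^ 2 + C (c3) * X 0 ^ 3 * X 1 + C (c4) * X 0 ^ 4 : MvPolynomial (Fin 2) ℂ) = C (1 * c1) * X 1 ^ 3 + C (2 * c2) * X 0 * X 1 ^ 2 + C (3 * c3) * X 0 ^ 2 * X 1 + C (4 * c4) * X 0 ^ 3 := by
  simp only [pderiv_mul, pderiv_C_mul, pderiv_pow, pderiv_X_self, map_add, pderiv_C, pderiv_X_of_ne (show (1:Fin 2) ≠ 0 by decide), pderiv_X_of_ne (show (0:Fin 2) ≠ 1 by decide)]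
  simp only [map_mul, map_ofNat, map_one]
  push_cast
  ring

lemma dy4 (c0 c1 c2 c3 c4 : ℂ) :
    pderiv 1 (C (c0) * X 1 ^ 4 + C (c1) * X 0 * X 1 ^ 3 + C (c2) * X 0 ^ 2 * X 1 ^ 2 + C (c3) * X 0 ^ 3 * X 1 + C (c4) * X 0 ^ 4 : MvPolynomial (Fin 2) ℂ) = C (4 * c0) * X 1 ^ 3 + C (3 * c1) * X 0 * X 1 ^ 2 + C (2 * c2) * X 0 ^ 2 * X 1 + C (1 * c3) * X 0 ^ 3 := by
  simp only [pderiv_mul, pderiv_C_mul, pderiv_pow, pderiv_X_self, map_add, pderiv_C, pderiv_X_of_ne (show (1:Fin 2) ≠ 0 by decide), pderiv_X_of_ne (show (0:Fin 2) ≠ 1 by decide)]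
  simp only [map_mul, map_ofNat, map_one]
  push_cast
  ring

lemma dx5 (c0 c1 c2 c3 c4 c5 : ℂ) :
    pderiv 0 (C (c0) * X 1 ^ 5 + C (c1) * X 0 * X 1 ^ 4 + C (c2) * X 0 ^ 2 * X 1 ^ 3 + C (c3) * X 0 ^ 3 * X 1 ^ 2 + C (c4) * X 0 ^ 4 * X 1 + C (c5) * X 0 ^ 5 : MvPolynomial (Fin 2) ℂ) = C (1 * c1) * X 1 ^ 4 + C (2 * c2) * X 0 * X 1 ^ 3 + C (3 * c3) * X 0 ^ 2 * X 1 ^ 2 + C (4 * c4) * X 0 ^ 3 * X 1 + C (5 * c5) * X 0 ^ 4 := by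
  simp only [pderiv_mul, pderiv_C_mul, pderiv_pow, pderiv_X_self, map_add, pderiv_C, pderiv_X_of_ne (show (1:Fin 2) ≠ 0 by decide), pderiv_X_of_ne (show (0:Fin 2) ≠ 1 by decide)]
  simp only [map_mul, map_ofNat, map_one]
  push_cast
  ring

lemma dy5 (c0 c1 c2 c3 c4 c5 : ℂ) :
    pderiv 1 (C (c0) * X 1 ^ 5 + C (c1) * X 0 * X 1 ^ 4 + C (c2) * X 0 ^ 2 * X 1 ^ 3 + C (c3) * X 0 ^ 3 * X 1 ^ 2 + C (c4) * X 0 ^ 4 * X 1 + C (c5) * X 0 ^ 5 : MvPolynomial (Fin 2) ℂ) = C (5 * c0) * X 1 ^ 4 + C (4 * c1) * X 0 * X 1 ^ 3 + C (3 * c2) * X 0 ^ 2 * X 1 ^ 2 + C (2 * c3) * X 0 ^ 3 * X 1 + C (1 * c4) * X 0 ^ 4 := by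
  simp only [pderiv_mul, pderiv_C_mul, pderiv_pow, pderiv_X_self, map_add, pderiv_C, pderiv_X_of_ne (show (1:Fin 2) ≠ 0 by decide), pderiv_X_of_ne (show (0:Fin 2) ≠ 1 by decide)]
  simp only [map_mul, map_ofNat, map_one]
  push_cast
  ring

lemma dx6 (c0 c1 c2 c3 c4 c5 c6 : ℂ) :
    pderiv 0 (C (c0) * X 1 ^ 6 + C (c1) * X 0 * X 1 ^ 5 + C (c2) * X 0 ^ 2 * X 1 ^ 4 + C (c3) * X 0 ^ 3 * X 1 ^ 3 + C (c4) * X 0 ^ 4 * X 1 ^ 2 + C (c5) * X 0 ^ 5 * X 1 + C (c6) * X 0 ^ 6 : MvPolynomial (Fin 2) ℂ) = C (1 * c1) * X 1 ^ 5 + C (2 * c2) * X 0 * X 1 ^ 4 + C (3 * c3) * X 0 ^ 2 * X 1 ^ 3 + C (4 * c4) * X 0 ^ 3 * X 1 ^ 2 + C (5 * c5) * X 0 ^ 4 * X 1 + C (6 * c6) * X 0 ^ 5 := by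
  simp only [pderiv_mul, pderiv_C_mul, pderiv_pow, pderiv_X_self, map_add, pderiv_C, pderiv_X_of_ne (show (1:Fin 2) ≠ 0 by decide), pderiv_X_of_ne (show (0:Fin 2) ≠ 1 by decide)]
  simp only [map_mul, map_ofNat, map_one]
  push_cast
  ring

lemma dy6 (c0 c1 c2 c3 c4 c5 c6 : ℂ) :
    pderiv 1 (C (c0) * X 1 ^ 6 + C (c1) * X 0 * X 1 ^ 5 + C (c2) * X 0 ^ 2 * X 1 ^ 4 + C (c3) * X 0 ^ 3 * X 1 ^ 3 + C (c4) * X 0 ^ 4 * X 1 ^ 2 + C (c5) * X 0 ^ 5 * X 1 + C (c6) * X 0 ^ 6 : MvPolynomial (Fin 2) ℂ) = C (6 * c0) * X 1 ^ 5 + C (5 * c1) * X 0 * X 1 ^ 4 + C (4 * c2) * X 0 ^ 2 * X 1 ^ 3 + C (3 * c3) * X 0 ^ 3 * X 1 ^ 2 + C (2 * c4) * X 0 ^ 4 * X 1 + C (1 * c5) * X 0 ^ 5 := by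
  simp only [pderiv_mul, pderiv_C_mul, pderiv_pow, pderiv_X_self, map_add, pderiv_C, pderiv_X_of_ne (show (1:Fin 2) ≠ 0 by decide), pderiv_X_of_ne (show (0:Fin 2) ≠ 1 by decide)]
  simp only [map_mul, map_ofNat, map_one]
  push_cast
  ring

lemma rep4_s16 (A : MvPolynomial (Fin 2) ℂ) (hA : A.IsHomogeneous 4) :
    A = ∑ j ∈ Finset.range 5,
      C (A.coeff (Finsupp.single 0 j + Finsupp.single 1 (4 - j))) * X 0 ^ j * X 1 ^ (4 - j) := by
  have key : ∀ (j k : ℕ) (c : ℂ), (C c * X 0 ^ j * X 1 ^ k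
      : MvPolynomial (Fin 2) ℂ) = monomial (Finsupp.single 0 j + Finsupp.single 1 k) c := by
    intro j k c
    rw [C_mul_X_pow_eq_monomial (n := j), X_pow_eq_monomial, monomial_mul, mul_one]
  simp only [key]
  ext m
  rw [coeff_sum]
  simp only [coeff_monomial]
  by_cases hm : m 0 + m 1 = 4
  · have hmd : m = Finsupp.single 0 (m 0) + Finsupp.single 1 (m 1) := by
      ext i; fin_cases i <;> simp
    have hm0 : m 0 ∈ Finset.range 5 := by simp; omega
    rw [Finset.sum_eq_single_of_mem (m 0) hm0]
    · rw [if_pos]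
      · conv_lhs => rw [hmd]
        have h41 : 4 - m 0 = m 1 := by omega
        rw [h41]
      · have h41 : 4 - m 0 = m 1 := by omega
        rw [h41, ← hmd]
    · intro j hj hne
      rw [if_neg]
      intro h
      apply hne
      have := congrArg (fun f => f 0) h
      simpa using this
  · have hz : A.coeff m = 0 := by
      by_contra h
      have h2 := hA h
      apply hm
      rw [show ((Finsupp.weight (1 : Fin 2 → ℕ)) m = m 0 + m 1) from by
        rw [Finsupp.weight_apply, Finsupp.sum_fintype _ _ (fun _ => by simp), Fin.sum_univ_two]
        simp [mul_comm]] at h2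
      exact h2
    rw [hz]
    symm
    apply Finset.sum_eq_zero
    intro j hj
    rw [if_neg]
    intro h
    apply hm
    have := congrArg (fun f => f 0 + f 1) h
    simp at this
    simp at hj
    omega

set_option maxHeartbeats 4000000 in
theorem aux_plucker (a0 a1 a2 a3 a4 b0 b1 b2 b3 b4 : ℂ) :
    (25 : ℂ) • transv 6 6 4 (transv 4 4 1 (C (a0) * X 1 ^ 4 + C (a1) * X 0 * X 1 ^ 3 + C (a2) * X 0 ^ 2 * X 1 ^ 2 + C (a3) * X 0 ^ 3 * X 1 + C (a4) * X 0 ^ 4) (C (b0) * X 1 ^ 4 + C (b1) * X 0 * X 1 ^ 3 + C (b2) * X 0 ^ 2 * X 1 ^ 2 + C (b3) * X 0 ^ 3 * X 1 + C (b4) * X 0 ^ 4)) (transv 4 4 1 (C (a0) * X 1 ^ 4 + C (a1) * X 0 * X 1 ^ 3 + C (a2) * X 0 ^ 2 * X 1 ^ 2 + C (a3) * X 0 ^ 3 * X 1 + C (a4) * X 0 ^ 4) (C (b0) * X 1 ^ 4 + C (b1) * X 0 * X 1 ^ 3 + C (b2) * X 0 ^ 2 * X 1 ^ 2 + C (b3)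 * X 0 ^ 3 * X 1 + C (b4) * X 0 ^ 4)) -
        (10 : ℂ) • transv 6 2 2 (transv 4 4 1 (C (a0) * X 1 ^ 4 + C (a1) * X 0 * X 1 ^ 3 + C (a2) * X 0 ^ 2 * X 1 ^ 2 + C (a3) * X 0 ^ 3 * X 1 + C (a4) * X 0 ^ 4) (C (b0) * X 1 ^ 4 + C (b1) * X 0 * X 1 ^ 3 + C (b2) * X 0 ^ 2 * X 1 ^ 2 + C (b3) * X 0 ^ 3 * X 1 + C (b4) * X 0 ^ 4)) (transv 4 4 3 (C (a0) * X 1 ^ 4 + C (a1) * X 0 * X 1 ^ 3 + C (a2) * X 0 ^ 2 * X 1 ^ 2 + C (a3) * X 0 ^ 3 * X 1 + C (a4) * X 0 ^ 4) (C (b0) * X 1 ^ 4 + C (b1) * X 0 * X 1 ^ 3 + C (b2) * X 0 ^ 2 * X 1 ^ 2 + C (b3) * X 0 ^ 3 * X 1 + C (b4) * X 0 ^ 4)) -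
        (4 : ℂ) • (transv 4 4 3 (C (a0) * X 1 ^ 4 + C (a1) * X 0 * X 1 ^ 3 + C (a2) * X 0 ^ 2 * X 1 ^ 2 + C (a3) * X 0 ^ 3 * X 1 + C (a4) * X 0 ^ 4) (C (b0) * X 1 ^ 4 + C (b1) * X 0 * X 1 ^ 3 + C (b2) * X 0 ^ 2 * X 1 ^ 2 + C (b3) * X 0 ^ 3 * X 1 + C (b4) * X 0 ^ 4) * transv 4 4 3 (C (a0) * X 1 ^ 4 + C (a1) * X 0 * X 1 ^ 3 + C (a2) * X 0 ^ 2 * X 1 ^ 2 + C (a3) * X 0 ^ 3 * X 1 + C (a4) * X 0 ^ 4) (C (b0) * X 1 ^ 4 + C (b1) * X 0 * X 1 ^ 3 + C (b2) * X 0 ^ 2 * X 1 ^ 2 + C (b3) * X 0 ^ 3 * X 1 + C (b4) * X 0 ^ 4)) = 0 := by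
  obtain ⟨t0, ht0⟩ : ∃ x : ℂ, x = -4 * a0 * b1 + 4 * a1 * b0 := ⟨_, rfl⟩
  obtain ⟨t1, ht1⟩ : ∃ x : ℂ, x = -8 * a0 * b2 + 8 * a2 * b0 := ⟨_, rfl⟩
  obtain ⟨t2, ht2⟩ : ∃ x : ℂ, x = -12 * a0 * b3 - 4 * a1 * b2 + 4 * a2 * b1 + 12 * a3 * b0 := ⟨_, rfl⟩
  obtain ⟨t3, ht3⟩ : ∃ x : ℂ, x = -16 * a0 * b4 - 8 * a1 * b3 + 8 * a3 * b1 + 16 * a4 * b0 := ⟨_, rfl⟩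
  obtain ⟨t4, ht4⟩ : ∃ x : ℂ, x = -12 * a1 * b4 - 4 * a2 * b3 + 4 * a3 * b2 + 12 * a4 * b1 := ⟨_, rfl⟩
  obtain ⟨t5, ht5⟩ : ∃ x : ℂ, x = -8 * a2 * b4 + 8 * a4 * b2 := ⟨_, rfl⟩
  obtain ⟨t6, ht6⟩ : ∃ x : ℂ, x = -4 * a3 * b4 + 4 * a4 * b3 := ⟨_, rfl⟩
  obtain ⟨u0, hu0⟩ : ∃ x : ℂ, x = -144 * a0 * b3 + 72 * a1 * b2 - 72 * a2 * b1 + 144 * a3 * b0 := ⟨_, rfl⟩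
  obtain ⟨u1, hu1⟩ : ∃ x : ℂ, x = -576 * a0 * b4 + 72 * a1 * b3 - 72 * a3 * b1 + 576 * a4 * b0 := ⟨_, rfl⟩
  obtain ⟨u2, hu2⟩ : ∃ x : ℂ, x = -144 * a1 * b4 + 72 * a2 * b3 - 72 * a3 * b2 + 144 * a4 * b1 := ⟨_, rfl⟩
  have hT1 : (16 : ℂ) • transv 4 4 1 (C (a0) * X 1 ^ 4 + C (a1) * X 0 * X 1 ^ 3 + C (a2) * X 0 ^ 2 * X 1 ^ 2 + C (a3) * X 0 ^ 3 * X 1 + C (a4) * X 0 ^ 4) (C (b0) * X 1 ^ 4 + C (b1) * X 0 * X 1 ^ 3 + C (b2) * X 0 ^ 2 * X 1 ^ 2 + C (b3) * X 0 ^ 3 * X 1 + C (b4) * X 0 ^ 4) = C (t0) * X 1 ^ 6 + C (t1) * X 0 * X 1 ^ 5 + C (t2) * X 0 ^ 2 * X 1 ^ 4 + C (t3) * X 0 ^ 3 * X 1 ^ 3 + C (t4) * X 0 ^ 4 * X 1 ^ 2 + C (t5) * X 0 ^ 5 * X 1 + C (t6) * X 0 ^ 6 := by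
    rw [ht0, ht1, ht2, ht3, ht4, ht5, ht6]
    rw [transv]
    simp only [Finset.sum_range_succ, Finset.sum_range_zero, Nat.factorial, Nat.choose]
    norm_num
    simp only [pd_zero', pd_one', pd_two', pd_three', pd_four', dx1, dy1, dx2, dy2, dx3, dy3, dx4, dy4, dx5, dy5, dx6, dy6]
    rw [smul_eq_C_mul, ← mul_assoc, ← map_mul]
    norm_num
    simp only [map_mul, map_add, map_sub, map_neg, map_one, map_ofNat]
    ring
  have hT3 : (576 : ℂ) • transv 4 4 3 (C (a0) * X 1 ^ 4 + C (a1) * X 0 * X 1 ^ 3 + C (a2) * X 0 ^ 2 * X 1 ^ 2 + C (a3) * X 0 ^ 3 * X 1 + C (a4) * X 0 ^ 4) (C (b0) * X 1 ^ 4 + C (b1) * X 0 * X 1 ^ 3 + C (b2) * X 0 ^ 2 * X 1 ^ 2 + C (b3) * X 0 ^ 3 * X 1 + C (b4) * X 0 ^ 4) = C (u0) * X 1 ^ 2 + C (u1) * X 0 * X 1 + C (u2) * X 0 ^ 2 := by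
    rw [hu0, hu1, hu2]
    rw [transv]
    simp only [Finset.sum_range_succ, Finset.sum_range_zero, Nat.factorial, Nat.choose]
    norm_num
    simp only [pd_zero', pd_one', pd_two', pd_three', pd_four', dx1, dy1, dx2, dy2, dx3, dy3, dx4, dy4, dx5, dy5, dx6, dy6]
    rw [smul_eq_C_mul, ← mul_assoc, ← map_mul]
    norm_num
    simp only [map_mul, map_add, map_sub, map_neg, map_one, map_ofNat]
    ring
  have hQ1 : (129600 : ℂ) • transv 6 6 4 (C (t0) * X 1 ^ 6 + C (t1) * X 0 * X 1 ^ 5 + C (t2) * X 0 ^ 2 * X 1 ^ 4 + C (t3) * X 0 ^ 3 * X 1 ^ 3 + C (t4) * X 0 ^ 4 * X 1 ^ 2 + C (t5) * X 0 ^ 5 * X 1 + C (t6) * X 0 ^ 6) (C (t0) * X 1 ^ 6 + C (t1) * X 0 * X 1 ^ 5 + C (t2) * X 0 ^ 2 * X 1 ^ 4 + C (t3) * X 0 ^ 3 * X 1 ^ 3 + C (t4) * X 0 ^ 4 * X 1 ^ 2 + C (t5) * X 0 ^ 5 * X 1 + C (t6) * X 0 ^ 6) =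
      (17280 * C t0 * C t4 - 8640 * C t1 * C t3 + 3456 * C t2 * C t2) * X 1 ^ 4 +
      (86400 * C t0 * C t5 - 17280 * C t1 * C t4 + 3456 * C t2 * C t3) * X 0 * X 1 ^ 3 +
      (259200 * C t0 * C t6 - 10368 * C t2 * C t4 + 5184 * C t3 * C t3) * X 0 ^ 2 * X 1 ^ 2 +
      (86400 * C t1 * C t6 - 17280 * C t2 * C t5 + 3456 * C t3 * C t4) * X 0 ^ 3 * X 1 +
      (17280 * C t2 * C t6 - 8640 * C t3 * C t5 + 3456 * C t4 * C t4) * X 0 ^ 4 := by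
    rw [transv]
    simp only [Finset.sum_range_succ, Finset.sum_range_zero, Nat.factorial, Nat.choose]
    norm_num
    simp only [pd_zero', pd_one', pd_two', pd_three', pd_four', dx1, dy1, dx2, dy2, dx3, dy3, dx4, dy4, dx5, dy5, dx6, dy6]
    rw [smul_eq_C_mul, ← mul_assoc, ← map_mul]
    norm_num
    simp only [map_mul, map_add, map_sub, map_neg, map_one, map_ofNat]
    ring
  have hQ2 : (60 : ℂ) • transv 6 2 2 (C (t0) * X 1 ^ 6 + C (t1) * X 0 * X 1 ^ 5 + C (t2) * X 0 ^ 2 * X 1 ^ 4 + C (t3) * X 0 ^ 3 * X 1 ^ 3 + C (t4) * X 0 ^ 4 * X 1 ^ 2 + C (t5) * X 0 ^ 5 * X 1 + C (t6) * X 0 ^ 6) (C (u0) * X 1 ^ 2 + C (u1) * X 0 * X 1 + C (u2) * X 0 ^ 2) =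
      (60 * C t0 * C u2 - 10 * C t1 * C u1 + 4 * C t2 * C u0) * X 1 ^ 4 +
      (40 * C t1 * C u2 - 16 * C t2 * C u1 + 12 * C t3 * C u0) * X 0 * X 1 ^ 3 +
      (24 * C t2 * C u2 - 18 * C t3 * C u1 + 24 * C t4 * C u0) * X 0 ^ 2 * X 1 ^ 2 +
      (12 * C t3 * C u2 - 16 * C t4 * C u1 + 40 * C t5 * C u0) * X 0 ^ 3 * X 1 +
      (4 * C t4 * C u2 - 10 * C t5 * C u1 + 60 * C t6 * C u0) * X 0 ^ 4 := by
    rw [transv]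
    simp only [Finset.sum_range_succ, Finset.sum_range_zero, Nat.factorial, Nat.choose]
    norm_num
    simp only [pd_zero', pd_one', pd_two', pd_three', pd_four', dx1, dy1, dx2, dy2, dx3, dy3, dx4, dy4, dx5, dy5, dx6, dy6]
    rw [smul_eq_C_mul, ← mul_assoc, ← map_mul]
    norm_num
    simp only [map_mul, map_add, map_sub, map_neg, map_one, map_ofNat]
    ring
  have hQ3 : ((C (u0) * X 1 ^ 2 + C (u1) * X 0 * X 1 + C (u2) * X 0 ^ 2) : MvPolynomial (Fin 2) ℂ) * (C (u0) * X 1 ^ 2 + C (u1) * X 0 * X 1 + C (u2) * X 0 ^ 2) =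
      (C u0 * C u0) * X 1 ^ 4 +
      (2 * C u0 * C u1) * X 0 * X 1 ^ 3 +
      (2 * C u0 * C u2 + C u1 * C u1) * X 0 ^ 2 * X 1 ^ 2 +
      (2 * C u1 * C u2) * X 0 ^ 3 * X 1 +
      (C u2 * C u2) * X 0 ^ 4 := by
    ring
  have hK0 : (17280 * C t0 * C t4 - 1440 * C t0 * C u2 - 8640 * C t1 * C t3 + 240 * C t1 * C u1 + 3456 * C t2 * C t2 - 96 * C t2 * C u0 - 16 * C u0 * C u0 : MvPolynomial (Fin 2) ℂ) = 0 := by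
    simp only [ht0, ht1, ht2, ht3, ht4, ht5, ht6, hu0, hu1, hu2]
    simp only [map_mul, map_add, map_sub, map_neg, map_one, map_ofNat]
    ring
  have hK1 : (86400 * C t0 * C t5 - 17280 * C t1 * C t4 - 960 * C t1 * C u2 + 3456 * C t2 * C t3 + 384 * C t2 * C u1 - 288 * C t3 * C u0 - 32 * C u0 * C u1 : MvPolynomial (Fin 2) ℂ) = 0 := by
    simp only [ht0, ht1, ht2, ht3, ht4, ht5, ht6, hu0, hu1, hu2]
    simp only [map_mul, map_add, map_sub, map_neg, map_one, map_ofNat]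
    ring
  have hK2 : (259200 * C t0 * C t6 - 10368 * C t2 * C t4 - 576 * C t2 * C u2 + 5184 * C t3 * C t3 + 432 * C t3 * C u1 - 576 * C t4 * C u0 - 32 * C u0 * C u2 - 16 * C u1 * C u1 : MvPolynomial (Fin 2) ℂ) = 0 := by
    simp only [ht0, ht1, ht2, ht3, ht4, ht5, ht6, hu0, hu1, hu2]
    simp only [map_mul, map_add, map_sub, map_neg, map_one, map_ofNat]
    ring
  have hK3 : (86400 * C t1 * C t6 - 17280 * C t2 * C t5 + 3456 * C t3 * C t4 - 288 * C t3 * C u2 + 384 * C t4 * C u1 - 960 * C t5 * C u0 - 32 * C u1 * C u2 : MvPolynomial (Fin 2) ℂ) = 0 := by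
    simp only [ht0, ht1, ht2, ht3, ht4, ht5, ht6, hu0, hu1, hu2]
    simp only [map_mul, map_add, map_sub, map_neg, map_one, map_ofNat]
    ring
  have hK4 : (17280 * C t2 * C t6 - 8640 * C t3 * C t5 + 3456 * C t4 * C t4 - 96 * C t4 * C u2 + 240 * C t5 * C u1 - 1440 * C t6 * C u0 - 16 * C u2 * C u2 : MvPolynomial (Fin 2) ℂ) = 0 := by
    simp only [ht0, ht1, ht2, ht3, ht4, ht5, ht6, hu0, hu1, hu2]
    simp only [map_mul, map_add, map_sub, map_neg, map_one, map_ofNat]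
    ring
  have hA1 : (33177600 : ℂ) • transv 6 6 4 (transv 4 4 1 (C (a0) * X 1 ^ 4 + C (a1) * X 0 * X 1 ^ 3 + C (a2) * X 0 ^ 2 * X 1 ^ 2 + C (a3) * X 0 ^ 3 * X 1 + C (a4) * X 0 ^ 4) (C (b0) * X 1 ^ 4 + C (b1) * X 0 * X 1 ^ 3 + C (b2) * X 0 ^ 2 * X 1 ^ 2 + C (b3) * X 0 ^ 3 * X 1 + C (b4) * X 0 ^ 4)) (transv 4 4 1 (C (a0) * X 1 ^ 4 + C (a1) * X 0 * X 1 ^ 3 + C (a2) * X 0 ^ 2 * X 1 ^ 2 + C (a3) * X 0 ^ 3 * X 1 + C (a4) * X 0 ^ 4) (C (b0) * X 1 ^ 4 + C (b1) * X 0 * X 1 ^ 3 + C (b2) * X 0 ^ 2 * X 1 ^ 2 + C (b3) * X 0 ^ 3 * X 1 + C (b4) * X 0 ^ 4)) =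
      (17280 * C t0 * C t4 - 8640 * C t1 * C t3 + 3456 * C t2 * C t2) * X 1 ^ 4 +
      (86400 * C t0 * C t5 - 17280 * C t1 * C t4 + 3456 * C t2 * C t3) * X 0 * X 1 ^ 3 +
      (259200 * C t0 * C t6 - 10368 * C t2 * C t4 + 5184 * C t3 * C t3) * X 0 ^ 2 * X 1 ^ 2 +
      (86400 * C t1 * C t6 - 17280 * C t2 * C t5 + 3456 * C t3 * C t4) * X 0 ^ 3 * X 1 +
      (17280 * C t2 * C t6 - 8640 * C t3 * C t5 + 3456 * C t4 * C t4) * X 0 ^ 4 := by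
    have h16 : transv 6 6 4 ((16:ℂ) • transv 4 4 1 (C (a0) * X 1 ^ 4 + C (a1) * X 0 * X 1 ^ 3 + C (a2) * X 0 ^ 2 * X 1 ^ 2 + C (a3) * X 0 ^ 3 * X 1 + C (a4) * X 0 ^ 4) (C (b0) * X 1 ^ 4 + C (b1) * X 0 * X 1 ^ 3 + C (b2) * X 0 ^ 2 * X 1 ^ 2 + C (b3) * X 0 ^ 3 * X 1 + C (b4) * X 0 ^ 4)) ((16:ℂ) • transv 4 4 1 (C (a0) * X 1 ^ 4 + C (a1) * X 0 * X 1 ^ 3 + C (a2) * X 0 ^ 2 * X 1 ^ 2 + C (a3) * X 0 ^ 3 * X 1 + C (a4) * X 0 ^ 4) (C (b0) * X 1 ^ 4 + C (b1) * X 0 * X 1 ^ 3 + C (b2) * X 0 ^ 2 * X 1 ^ 2 + C (b3) * X 0 ^ 3 * X 1 + C (b4) * X 0 ^ 4))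
        = (256:ℂ) • transv 6 6 4 (transv 4 4 1 (C (a0) * X 1 ^ 4 + C (a1) * X 0 * X 1 ^ 3 + C (a2) * X 0 ^ 2 * X 1 ^ 2 + C (a3) * X 0 ^ 3 * X 1 + C (a4) * X 0 ^ 4) (C (b0) * X 1 ^ 4 + C (b1) * X 0 * X 1 ^ 3 + C (b2) * X 0 ^ 2 * X 1 ^ 2 + C (b3) * X 0 ^ 3 * X 1 + C (b4) * X 0 ^ 4)) (transv 4 4 1 (C (a0) * X 1 ^ 4 + C (a1) * X 0 * X 1 ^ 3 + C (a2) * X 0 ^ 2 * X 1 ^ 2 + C (a3) * X 0 ^ 3 * X 1 + C (a4) * X 0 ^ 4) (C (b0) * X 1 ^ 4 + C (b1) * X 0 * X 1 ^ 3 + C (b2) * X 0 ^ 2 * X 1 ^ 2 + C (b3) * X 0 ^ 3 * X 1 + C (b4) * X 0 ^ 4)) := by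
      rw [transv_smul_left, transv_smul_right, smul_smul]; norm_num
    rw [hT1] at h16
    rw [show (33177600 : ℂ) = 129600 * 256 by norm_num, ← smul_smul, ← h16, hQ1]
  have hA2 : (552960 : ℂ) • transv 6 2 2 (transv 4 4 1 (C (a0) * X 1 ^ 4 + C (a1) * X 0 * X 1 ^ 3 + C (a2) * X 0 ^ 2 * X 1 ^ 2 + C (a3) * X 0 ^ 3 * X 1 + C (a4) * X 0 ^ 4) (C (b0) * X 1 ^ 4 + C (b1) * X 0 * X 1 ^ 3 + C (b2) * X 0 ^ 2 * X 1 ^ 2 + C (b3) * X 0 ^ 3 * X 1 + C (b4) * X 0 ^ 4)) (transv 4 4 3 (C (a0) * X 1 ^ 4 + C (a1) * X 0 * X 1 ^ 3 + C (a2) * X 0 ^ 2 * X 1 ^ 2 + C (a3) * X 0 ^ 3 * X 1 + C (a4) * X 0 ^ 4) (C (b0) * X 1 ^ 4 + C (b1) * X 0 * X 1 ^ 3 + C (b2) * X 0 ^ 2 * X 1 ^ 2 + C (b3) * X 0 ^ 3 * X 1 + C (b4) * X 0 ^ 4)) =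
      (60 * C t0 * C u2 - 10 * C t1 * C u1 + 4 * C t2 * C u0) * X 1 ^ 4 +
      (40 * C t1 * C u2 - 16 * C t2 * C u1 + 12 * C t3 * C u0) * X 0 * X 1 ^ 3 +
      (24 * C t2 * C u2 - 18 * C t3 * C u1 + 24 * C t4 * C u0) * X 0 ^ 2 * X 1 ^ 2 +
      (12 * C t3 * C u2 - 16 * C t4 * C u1 + 40 * C t5 * C u0) * X 0 ^ 3 * X 1 +
      (4 * C t4 * C u2 - 10 * C t5 * C u1 + 60 * C t6 * C u0) * X 0 ^ 4 := by
    have h16 : transv 6 2 2 ((16:ℂ) • transv 4 4 1 (C (a0) * X 1 ^ 4 + C (a1) * X 0 * X 1 ^ 3 + C (a2) * X 0 ^ 2 * X 1 ^ 2 + C (a3) * X 0 ^ 3 * X 1 + C (a4) * X 0 ^ 4) (C (b0) * X 1 ^ 4 + C (b1) * X 0 * X 1 ^ 3 + C (b2) * X 0 ^ 2 * X 1 ^ 2 + C (b3) * X 0 ^ 3 * X 1 + C (b4) * X 0 ^ 4)) ((576:ℂ) • transv 4 4 3 (C (a0) * X 1 ^ 4 + C (a1) * X 0 * X 1 ^ 3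 + C (a2) * X 0 ^ 2 * X 1 ^ 2 + C (a3) * X 0 ^ 3 * X 1 + C (a4) * X 0 ^ 4) (C (b0) * X 1 ^ 4 + C (b1) * X 0 * X 1 ^ 3 + C (b2) * X 0 ^ 2 * X 1 ^ 2 + C (b3) * X 0 ^ 3 * X 1 + C (b4) * X 0 ^ 4))
        = (9216:ℂ) • transv 6 2 2 (transv 4 4 1 (C (a0) * X 1 ^ 4 + C (a1) * X 0 * X 1 ^ 3 + C (a2) * X 0 ^ 2 * X 1 ^ 2 + C (a3) * X 0 ^ 3 * X 1 + C (a4) * X 0 ^ 4) (C (b0) * X 1 ^ 4 + C (b1) * X 0 * X 1 ^ 3 + C (b2) * X 0 ^ 2 * X 1 ^ 2 + C (b3) * X 0 ^ 3 * X 1 + C (b4) * X 0 ^ 4)) (transv 4 4 3 (C (a0) * X 1 ^ 4 + C (a1) * X 0 * X 1 ^ 3 + C (a2) * X 0 ^ 2 * X 1 ^ 2 + C (a3) * X 0 ^ 3 * X 1 + C (a4) * X 0 ^ 4) (C (b0) * X 1 ^ 4 + C (b1) * X 0 * X 1 ^ 3 + C (b2) * X 0 ^ 2 * X 1 ^ 2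 + C (b3) * X 0 ^ 3 * X 1 + C (b4) * X 0 ^ 4)) := by
      rw [transv_smul_left, transv_smul_right, smul_smul]; norm_num
    rw [hT1, hT3] at h16
    rw [show (552960 : ℂ) = 60 * 9216 by norm_num, ← smul_smul, ← h16, hQ2]
  have hA3 : (331776 : ℂ) • (transv 4 4 3 (C (a0) * X 1 ^ 4 + C (a1) * X 0 * X 1 ^ 3 + C (a2) * X 0 ^ 2 * X 1 ^ 2 + C (a3) * X 0 ^ 3 * X 1 + C (a4) * X 0 ^ 4) (C (b0) * X 1 ^ 4 + C (b1) * X 0 * X 1 ^ 3 + C (b2) * X 0 ^ 2 * X 1 ^ 2 + C (b3) * X 0 ^ 3 * X 1 + C (b4) * X 0 ^ 4) * transv 4 4 3 (C (a0) * X 1 ^ 4 + C (a1) * X 0 * X 1 ^ 3 + C (a2) * X 0 ^ 2 * X 1 ^ 2 + C (a3) * X 0 ^ 3 * X 1 + C (a4) * X 0 ^ 4) (C (b0) * X 1 ^ 4 + C (b1) * X 0 * X 1 ^ 3 + C (b2) * X 0 ^ 2 * X 1 ^ 2 + C (b3) * X 0 ^ 3 * X 1 + C (b4) * X 0 ^ 4))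 =
      (C u0 * C u0) * X 1 ^ 4 +
      (2 * C u0 * C u1) * X 0 * X 1 ^ 3 +
      (2 * C u0 * C u2 + C u1 * C u1) * X 0 ^ 2 * X 1 ^ 2 +
      (2 * C u1 * C u2) * X 0 ^ 3 * X 1 +
      (C u2 * C u2) * X 0 ^ 4 := by
    rw [show (331776 : ℂ) • (transv 4 4 3 (C (a0) * X 1 ^ 4 + C (a1) * X 0 * X 1 ^ 3 + C (a2) * X 0 ^ 2 * X 1 ^ 2 + C (a3) * X 0 ^ 3 * X 1 + C (a4) * X 0 ^ 4) (C (b0) * X 1 ^ 4 + C (b1) * X 0 * X 1 ^ 3 + C (b2) * X 0 ^ 2 * X 1 ^ 2 + C (b3) * X 0 ^ 3 * X 1 + C (b4) * X 0 ^ 4) * transv 4 4 3 (C (a0) * X 1 ^ 4 + C (a1) * X 0 * X 1 ^ 3 + C (a2) * X 0 ^ 2 * X 1 ^ 2 + C (a3) * X 0 ^ 3 * X 1 + C (a4) * X 0 ^ 4) (C (b0) * X 1 ^ 4 + C (b1) * X 0 * X 1 ^ 3 + C (b2) * X 0 ^ 2 * X 1 ^ 2 + C (b3) * X 0 ^ 3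 * X 1 + C (b4) * X 0 ^ 4))
        = ((576:ℂ) • transv 4 4 3 (C (a0) * X 1 ^ 4 + C (a1) * X 0 * X 1 ^ 3 + C (a2) * X 0 ^ 2 * X 1 ^ 2 + C (a3) * X 0 ^ 3 * X 1 + C (a4) * X 0 ^ 4) (C (b0) * X 1 ^ 4 + C (b1) * X 0 * X 1 ^ 3 + C (b2) * X 0 ^ 2 * X 1 ^ 2 + C (b3) * X 0 ^ 3 * X 1 + C (b4) * X 0 ^ 4)) * ((576:ℂ) • transv 4 4 3 (C (a0) * X 1 ^ 4 + C (a1) * X 0 * X 1 ^ 3 + C (a2) * X 0 ^ 2 * X 1 ^ 2 + C (a3) * X 0 ^ 3 * X 1 + C (a4) * X 0 ^ 4) (C (b0) * X 1 ^ 4 + C (b1) * X 0 * X 1 ^ 3 + C (b2) * X 0 ^ 2 * X 1 ^ 2 + C (b3) * X 0 ^ 3 * X 1 + C (b4) * X 0 ^ 4)) from by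
      rw [smul_mul_smul_comm]; norm_num, hT3, hQ3]
  have main : (1327104 : ℂ) • ((25 : ℂ) • transv 6 6 4 (transv 4 4 1 (C (a0) * X 1 ^ 4 + C (a1) * X 0 * X 1 ^ 3 + C (a2) * X 0 ^ 2 * X 1 ^ 2 + C (a3) * X 0 ^ 3 * X 1 + C (a4) * X 0 ^ 4) (C (b0) * X 1 ^ 4 + C (b1) * X 0 * X 1 ^ 3 + C (b2) * X 0 ^ 2 * X 1 ^ 2 + C (b3) * X 0 ^ 3 * X 1 + C (b4) * X 0 ^ 4)) (transv 4 4 1 (C (a0) * X 1 ^ 4 + C (a1) * X 0 * X 1 ^ 3 + C (a2) * X 0 ^ 2 * X 1 ^ 2 + C (a3) * X 0 ^ 3 * X 1 + C (a4) * X 0 ^ 4) (C (b0) * X 1 ^ 4 + C (b1) * X 0 * X 1 ^ 3 + C (b2) * X 0 ^ 2 * X 1 ^ 2 + C (b3) * X 0 ^ 3 * X 1 + C (b4) * X 0 ^ 4)) -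
        (10 : ℂ) • transv 6 2 2 (transv 4 4 1 (C (a0) * X 1 ^ 4 + C (a1) * X 0 * X 1 ^ 3 + C (a2) * X 0 ^ 2 * X 1 ^ 2 + C (a3) * X 0 ^ 3 * X 1 + C (a4) * X 0 ^ 4) (C (b0) * X 1 ^ 4 + C (b1) * X 0 * X 1 ^ 3 + C (b2) * X 0 ^ 2 * X 1 ^ 2 + C (b3) * X 0 ^ 3 * X 1 + C (b4) * X 0 ^ 4)) (transv 4 4 3 (C (a0) * X 1 ^ 4 + C (a1) * X 0 * X 1 ^ 3 + C (a2) * X 0 ^ 2 * X 1 ^ 2 + C (a3) * X 0 ^ 3 * X 1 + C (a4) * X 0 ^ 4) (C (b0) * X 1 ^ 4 + C (b1) * X 0 * X 1 ^ 3 + C (b2) * X 0 ^ 2 * X 1 ^ 2 + C (b3) * X 0 ^ 3 * X 1 + C (b4) * X 0 ^ 4)) -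
        (4 : ℂ) • (transv 4 4 3 (C (a0) * X 1 ^ 4 + C (a1) * X 0 * X 1 ^ 3 + C (a2) * X 0 ^ 2 * X 1 ^ 2 + C (a3) * X 0 ^ 3 * X 1 + C (a4) * X 0 ^ 4) (C (b0) * X 1 ^ 4 + C (b1) * X 0 * X 1 ^ 3 + C (b2) * X 0 ^ 2 * X 1 ^ 2 + C (b3) * X 0 ^ 3 * X 1 + C (b4) * X 0 ^ 4) * transv 4 4 3 (C (a0) * X 1 ^ 4 + C (a1) * X 0 * X 1 ^ 3 + C (a2) * X 0 ^ 2 * X 1 ^ 2 + C (a3) * X 0 ^ 3 * X 1 + C (a4) * X 0 ^ 4) (C (b0) * X 1 ^ 4 + C (b1) * X 0 * X 1 ^ 3 + C (b2) * X 0 ^ 2 * X 1 ^ 2 + C (b3) * X 0 ^ 3 * X 1 + C (b4) * X 0 ^ 4))) = 0 := by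
    rw [smul_sub, smul_sub, smul_smul, smul_smul, smul_smul,
      show (1327104:ℂ) * 25 = 33177600 by norm_num,
      show (1327104:ℂ) * 10 = 24 * 552960 by norm_num,
      show (1327104:ℂ) * 4 = 16 * 331776 by norm_num,
      ← smul_smul, ← smul_smul, hA1, hA2, hA3,
      smul_eq_C_mul, smul_eq_C_mul]
    simp only [map_ofNat]
    linear_combination (norm := ring1) hK0 * (X 1 : MvPolynomial (Fin 2) ℂ) ^ 4 + hK1 * (X 0 * X 1 ^ 3) + hK2 * (X 0 ^ 2 * X 1 ^ 2) + hK3 * (X 0 ^ 3 * X 1) + hK4 * ((X 0:MvPolynomial (Fin 2) ℂ) ^ 4)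
  have h0 := smul_eq_zero.mp main
  rcases h0 with h | h
  · exact absurd h (by norm_num)
  · exact h

set_option maxHeartbeats 1000000 in
/-- for binary quartics A, B, with T₁ = (A,B)₁ and T₃ = (A,B)₃,
`25·(T₁,T₁)₄ − 10·(T₁,T₃)₂ − 4·T₃² = 0`. -/
theorem quartic_plucker_relation (A B : MvPolynomial (Fin 2) ℂ)
    (hA : A.IsHomogeneous 4) (hB : B.IsHomogeneous 4) :
    (25 : ℂ) • transv 6 6 4 (transv 4 4 1 A B) (transv 4 4 1 A B) -
        (10 : ℂ) • transv 6 2 2 (transv 4 4 1 A B) (transv 4 4 3 A B) -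
        (4 : ℂ) • (transv 4 4 3 A B * transv 4 4 3 A B) = 0 := by
  have eA : A = C (A.coeff (Finsupp.single 0 0 + Finsupp.single 1 4)) * X 1 ^ 4 + C (A.coeff (Finsupp.single 0 1 + Finsupp.single 1 3)) * X 0 * X 1 ^ 3 + C (A.coeff (Finsupp.single 0 2 + Finsupp.single 1 2)) * X 0 ^ 2 * X 1 ^ 2 + C (A.coeff (Finsupp.single 0 3 + Finsupp.single 1 1)) * X 0 ^ 3 * X 1 + C (A.coeff (Finsupp.single 0 4 + Finsupp.single 1 0)) * X 0 ^ 4 := by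
    conv_lhs => rw [rep4_s16 A hA]
    simp only [Finset.sum_range_succ, Finset.sum_range_zero, zero_add,
      show (4:ℕ)-0=4 from rfl, show (4:ℕ)-1=3 from rfl, show (4:ℕ)-2=2 from rfl,
      show (4:ℕ)-3=1 from rfl, show (4:ℕ)-4=0 from rfl, pow_zero, pow_one, mul_one]
    try ring
  have eB : B = C (B.coeff (Finsupp.single 0 0 + Finsupp.single 1 4)) * X 1 ^ 4 + C (B.coeff (Finsupp.single 0 1 + Finsupp.single 1 3)) * X 0 * X 1 ^ 3 + C (B.coeff (Finsupp.single 0 2 + Finsupp.single 1 2)) * X 0 ^ 2 * X 1 ^ 2 + C (B.coeff (Finsupp.single 0 3 + Finsupp.single 1 1)) * X 0 ^ 3 * X 1 + C (B.coeff (Finsupp.single 0 4 + Finsupp.single 1 0)) * X 0 ^ 4 := by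
    conv_lhs => rw [rep4_s16 B hB]
    simp only [Finset.sum_range_succ, Finset.sum_range_zero, zero_add,
      show (4:ℕ)-0=4 from rfl, show (4:ℕ)-1=3 from rfl, show (4:ℕ)-2=2 from rfl,
      show (4:ℕ)-3=1 from rfl, show (4:ℕ)-4=0 from rfl, pow_zero, pow_one, mul_one]
    try ring
  rw [eA, eB]
  exact aux_plucker _ _ _ _ _ _ _ _ _ _
end

section
/- For binary cubics A, B (d = 3), with T₁ = (A,B)₁ and T₃ = (A,B)₃, the identity (T₁,T₁)₄ = (1/6)·T₃² holds. -/
open MvPolynomial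

/-- Decomposition of a binary cubic into its four monomials. -/
lemma decomp3 (P : MvPolynomial (Fin 2) ℂ) (h : P.IsHomogeneous 3) :
    P = ∑ k ∈ Finset.range 4,
      C (P.coeff (Finsupp.single 0 k + Finsupp.single 1 (3 - k))) * X 0 ^ k * X 1 ^ (3 - k) := by
  ext d
  rw [coeff_sum]
  have mon_eq : ∀ (c : ℂ) (k m : ℕ),
      (monomial (Finsupp.single 0 k + Finsupp.single 1 m) c : MvPolynomial (Fin 2) ℂ)
        = C c * X 0 ^ k * X 1 ^ m := by
    intro c k m
    rw [monomial_eq, Finsupp.prod_add_index (by simp) (by intros; rw [pow_add])]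
    simp [Finsupp.prod_single_index, mul_assoc]
  simp only [← mon_eq, coeff_monomial]
  by_cases hd : d 0 + d 1 = 3
  · rw [Finset.sum_eq_single (d 0)]
    · have hsd : Finsupp.single (0 : Fin 2) (d 0) + Finsupp.single 1 (3 - d 0) = d := by
        ext j; fin_cases j <;> simp [Finsupp.single_apply] <;> omega
      rw [if_pos hsd, hsd]
    · intro b _ hb
      rw [if_neg]
      intro hc
      apply hb
      have := DFunLike.congr_fun hc 0
      simpa [Finsupp.single_apply] using this
    · intro hmem
      exfalso; apply hmem; simp; omega
  · have h0 : P.coeff d = 0 := by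
      by_contra hc
      exact hd (by simpa [Finsupp.weight_apply, Finsupp.sum_fintype, Fin.sum_univ_two] using h hc)
    rw [h0]
    symm
    apply Finset.sum_eq_zero
    intro k hk
    rw [if_neg]
    intro hc
    apply hd
    have h0' := DFunLike.congr_fun hc 0
    have h1' := DFunLike.congr_fun hc 1
    simp [Finsupp.single_apply] at h0' h1'
    have hk4 : k ≤ 3 := by simpa using Nat.lt_succ_iff.mp (Finset.mem_range.mp hk)
    omega

lemma sum4 (a : ℕ → ℂ) :
    ∑ k ∈ Finset.range 4, C (a k) * X 0 ^ k * X 1 ^ (3 - k) =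
      C (a 0) * X 1 ^ 3 + C (a 1) * X 0 * X 1 ^ 2 + C (a 2) * X 0 ^ 2 * X 1 + C (a 3) * X 0 ^ 3 := by
  simp [Finset.sum_range_succ]

/-- Explicit monomial form of a binary cubic. -/
lemma decomp3' (P : MvPolynomial (Fin 2) ℂ) (h : P.IsHomogeneous 3) :
    P = C (P.coeff (Finsupp.single 0 0 + Finsupp.single 1 3)) * X 1 ^ 3 +
        C (P.coeff (Finsupp.single 0 1 + Finsupp.single 1 2)) * X 0 * X 1 ^ 2 +
        C (P.coeff (Finsupp.single 0 2 + Finsupp.single 1 1)) * X 0 ^ 2 * X 1 +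
        C (P.coeff (Finsupp.single 0 3 + Finsupp.single 1 0)) * X 0 ^ 3 := by
  conv_lhs => rw [decomp3 P h]
  norm_num [Finset.sum_range_succ, -Finsupp.single_tsub]

/-- The first transvectant of two explicit cubics. -/
lemma L1 (a0 a1 a2 a3 b0 b1 b2 b3 : ℂ) :
    transv 3 3 1 (C a0 * X 1 ^ 3 + C a1 * X 0 * X 1 ^ 2 + C a2 * X 0 ^ 2 * X 1 + C a3 * X 0 ^ 3)
        (C b0 * X 1 ^ 3 + C b1 * X 0 * X 1 ^ 2 + C b2 * X 0 ^ 2 * X 1 + C b3 * X 0 ^ 3) =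
      C ((a1 * b0 - a0 * b1) / 3) * X 1 ^ 4 +
      C (2 * (a2 * b0 - a0 * b2) / 3) * X 0 * X 1 ^ 3 +
      C (a3 * b0 - a0 * b3 + (a2 * b1 - a1 * b2) / 3) * X 0 ^ 2 * X 1 ^ 2 +
      C (2 * (a3 * b1 - a1 * b3) / 3) * X 0 ^ 3 * X 1 +
      C ((a3 * b2 - a2 * b3) / 3) * X 0 ^ 4 := by
  simp only [transv, Finset.sum_range_succ, Finset.sum_range_zero]
  norm_num [Nat.factorial, Nat.choose]
  simp only [pow_succ, pow_zero, one_mul]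
  simp only [pd, Function.iterate_succ, Function.iterate_zero, Function.comp_apply, id_eq,
    map_add, pderiv_mul, pderiv_X_self, pderiv_X_of_ne (show (1:Fin 2) ≠ 0 by decide),
    pderiv_X_of_ne (show (0:Fin 2) ≠ 1 by decide), pderiv_C, pderiv_one,
    zero_mul, mul_zero, add_zero, zero_add, mul_one, one_mul]
  apply MvPolynomial.funext
  intro x
  simp only [map_add, map_mul, map_sub, map_neg, map_ofNat, map_one, eval_add, eval_mul,
    eval_sub, eval_pow, eval_C, eval_X]
  ring

/-- The third transvectant of two explicit cubics. -/
lemma L3 (a0 a1 a2 a3 b0 b1 b2 b3 : ℂ) :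
    transv 3 3 3 (C a0 * X 1 ^ 3 + C a1 * X 0 * X 1 ^ 2 + C a2 * X 0 ^ 2 * X 1 + C a3 * X 0 ^ 3)
        (C b0 * X 1 ^ 3 + C b1 * X 0 * X 1 ^ 2 + C b2 * X 0 ^ 2 * X 1 + C b3 * X 0 ^ 3) =
      C (a3 * b0 - a0 * b3 + (a1 * b2 - a2 * b1) / 3) := by
  simp only [transv, Finset.sum_range_succ, Finset.sum_range_zero]
  norm_num [Nat.factorial, Nat.choose]
  simp only [pow_succ, pow_zero, one_mul]
  simp only [pd, Function.iterate_succ, Function.iterate_zero, Function.comp_apply, id_eq,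
    map_add, pderiv_mul, pderiv_X_self, pderiv_X_of_ne (show (1:Fin 2) ≠ 0 by decide),
    pderiv_X_of_ne (show (0:Fin 2) ≠ 1 by decide), pderiv_C, pderiv_one,
    zero_mul, mul_zero, add_zero, zero_add, mul_one, one_mul]
  apply MvPolynomial.funext
  intro x
  simp only [map_add, map_mul, map_sub, map_neg, map_ofNat, map_one, eval_add, eval_mul,
    eval_sub, eval_pow, eval_C, eval_X]
  ring

set_option maxHeartbeats 1600000 in
/-- The fourth transvectant of an explicit quartic with itself. -/
lemma L4 (c0 c1 c2 c3 c4 : ℂ) :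
    transv 4 4 4 (C c0 * X 1 ^ 4 + C c1 * X 0 * X 1 ^ 3 + C c2 * X 0 ^ 2 * X 1 ^ 2 +
        C c3 * X 0 ^ 3 * X 1 + C c4 * X 0 ^ 4)
      (C c0 * X 1 ^ 4 + C c1 * X 0 * X 1 ^ 3 + C c2 * X 0 ^ 2 * X 1 ^ 2 +
        C c3 * X 0 ^ 3 * X 1 + C c4 * X 0 ^ 4) =
      C (2 * (c0 * c4) - c1 * c3 / 2 + c2 * c2 / 6) := by
  simp only [transv, Finset.sum_range_succ, Finset.sum_range_zero]
  norm_num [Nat.factorial, Nat.choose]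
  simp only [pow_succ, pow_zero, one_mul]
  simp only [pd, Function.iterate_succ, Function.iterate_zero, Function.comp_apply, id_eq,
    map_add, pderiv_mul, pderiv_X_self, pderiv_X_of_ne (show (1:Fin 2) ≠ 0 by decide),
    pderiv_X_of_ne (show (0:Fin 2) ≠ 1 by decide), pderiv_C, pderiv_one,
    zero_mul, mul_zero, add_zero, zero_add, mul_one, one_mul]
  apply MvPolynomial.funext
  intro x
  simp only [map_add, map_mul, map_sub, map_neg, map_ofNat, map_one, eval_add, eval_mul,
    eval_sub, eval_pow, eval_C, eval_X]
  ring

/-- for binary cubics A, B, with T₁ = (A,B)₁ and T₃ = (A,B)₃,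
`(T₁,T₁)₄ = (1/6)·T₃²`. -/
theorem cubic_plucker_relation (A B : MvPolynomial (Fin 2) ℂ)
    (hA : A.IsHomogeneous 3) (hB : B.IsHomogeneous 3) :
    transv 4 4 4 (transv 3 3 1 A B) (transv 3 3 1 A B) =
      ((1 : ℂ) / 6) • (transv 3 3 3 A B * transv 3 3 3 A B) := by
  rw [decomp3' A hA, decomp3' B hB, L1, L3, L4]
  rw [smul_eq_C_mul, ← C_mul, ← C_mul]
  rw [C_inj]
  ring
end

section
/- For binary quadratics A, B (d = 2), the resultant of A and B equals a nonzero constant times (T₁,T₁)₂, where T₁ = (A,B)₁. -/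
open MvPolynomial

/-- The first transvectant of two binary quadratics, computed explicitly. -/
theorem transv_one_eq (a0 a1 a2 b0 b1 b2 : ℂ) :
    transv 2 2 1 (C a0 * X 0 ^ 2 + C a1 * X 0 * X 1 + C a2 * X 1 ^ 2)
      (C b0 * X 0 ^ 2 + C b1 * X 0 * X 1 + C b2 * X 1 ^ 2) =
      C ((a0*b1-a1*b0)/2) * X 0 ^ 2 + C (a0*b2-a2*b0) * X 0 * X 1
        + C ((a1*b2-a2*b1)/2) * X 1 ^ 2 := by
  have e1 : ((a0*b1-a1*b0)/2 : ℂ) = 1/4 * (2*(a0*b1) - 2*(a1*b0)) := by ring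
  have e2 : (a0*b2-a2*b0 : ℂ) = 1/4 * (4*(a0*b2) - 4*(a2*b0)) := by ring
  have e3 : ((a1*b2-a2*b1)/2 : ℂ) = 1/4 * (2*(a1*b2) - 2*(a2*b1)) := by ring
  rw [e1, e2, e3]
  simp only [transv, pd, Finset.sum_range_succ, Finset.sum_range_zero,
    Function.iterate_succ, Function.iterate_zero, Function.comp_apply, id_eq,
    map_add, map_mul, map_sub, map_ofNat, pderiv_X_self,
    pderiv_X_of_ne (by decide : (0:Fin 2) ≠ 1), pderiv_X_of_ne (by decide : (1:Fin 2) ≠ 0),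
    pderiv_C, mul_zero, zero_mul, mul_one, one_mul, add_zero, zero_add]
  norm_num
  ring

/-- The constant term of `(T,T)₂` for a binary quadratic `T`. -/
theorem constantCoeff_transv_two (p q r : ℂ) :
    constantCoeff (transv 2 2 2 (C p * X 0 ^ 2 + C q * X 0 * X 1 + C r * X 1 ^ 2)
      (C p * X 0 ^ 2 + C q * X 0 * X 1 + C r * X 1 ^ 2)) = 2*p*r - q^2/2 := by
  simp only [transv, pd, Finset.sum_range_succ, Finset.sum_range_zero,
    Function.iterate_succ, Function.iterate_zero, Function.comp_apply, id_eq,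
    map_add, map_mul, map_sub, map_pow, map_neg, map_one, map_ofNat, pderiv_X_self,
    pderiv_X_of_ne (by decide : (0:Fin 2) ≠ 1), pderiv_X_of_ne (by decide : (1:Fin 2) ≠ 0),
    pderiv_C, mul_zero, zero_mul, mul_one, one_mul, add_zero, zero_add,
    constantCoeff_C, constantCoeff_X]
  norm_num [map_ofNat]
  ring

/-- for binary quadratics A, B, the resultant (the 4×4 Sylvester
determinant in the coefficients) equals a fixed nonzero constant times
`(T₁,T₁)₂`, where T₁ = (A,B)₁. -/
theorem resultant_from_T1 :
    ∃ c : ℂ, c ≠ 0 ∧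
      ∀ a0 a1 a2 b0 b1 b2 : ℂ,
        Matrix.det !![a0, a1, a2, 0; 0, a0, a1, a2; b0, b1, b2, 0; 0, b0, b1, b2] =
          c * coeff 0
            (transv 2 2 2
              (transv 2 2 1
                (C a0 * X 0 ^ 2 + C a1 * X 0 * X 1 + C a2 * X 1 ^ 2)
                (C b0 * X 0 ^ 2 + C b1 * X 0 * X 1 + C b2 * X 1 ^ 2))
              (transv 2 2 1
                (C a0 * X 0 ^ 2 + C a1 * X 0 * X 1 + C a2 * X 1 ^ 2)
                (C b0 * X 0 ^ 2 + C b1 * X 0 * X 1 + C b2 * X 1 ^ 2))) := by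
  refine ⟨-2, by norm_num, fun a0 a1 a2 b0 b1 b2 => ?_⟩
  rw [← constantCoeff_eq, transv_one_eq, constantCoeff_transv_two]
  simp [Matrix.det_succ_row_zero, Fin.sum_univ_succ, Fin.succAbove]
  ring
end
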